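/- arXiv:2104.11310 — 10 statements merged into one kernel-verified Lean document; each statement's English description precedes it below -/
import Mathlib

section
/- Let F = (X_1, …, X_n) with X_i ∈ ℝ^{d×d_i} be a matrix frame, c = (c_1,…,c_n) ∈ ℚ^n_{>0} with ∑_{i=1}^n c_i = d, and t* = (t*_1,…,t*_n) ∈ ℝ^n. Then the following are equivalent: (1) f_F(c) is finite and the infimum defining f_F(c) is attained at t*; (2) the point (e^{t*_1},…,e^{t*_n}) belongs to 𝕍(F,c). -/
/-! By the Cauchy–Binet formula, `det (∑ ξᵢ XᵢXᵢᵀ) = ∑_{S ∈ 𝒜} ξ^{|S|} Δ_S`, where every `Δ_S`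
is a Gram determinant, hence `≥ 0`. So `exp (Φ_F(t) - ⟨t, c⟩) = ∑_S Δ_S exp ⟨t, |S| - c⟩` is a
nonnegative combination of exponentials of linear forms, and it is positive because `F` is a
frame. Such a function is convex, so `t*` minimises it exactly when its gradient vanishes there;
multiplied by `exp ⟨t*, c⟩`, the `i`-th partial derivative at `t*` is the difference of the two
sides of the `i`-th equation defining `𝕍(F, c)` at `ξ = exp t*`. -/

open scoped BigOperators
open Matrix

namespace MFrames

/-- The squared Frobenius norm of a real matrix. -/
noncomputable def frobSq {α β : Type*} [Fintype α] [Fintype β] (X : Matrix α β ℝ) : ℝ :=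
  ∑ i, ∑ j, X i j ^ 2

variable {d n : ℕ} {m : Fin n → ℕ}

/-- Squared distance between two tuples of matrices. -/
noncomputable def dist2 (F G : ∀ i : Fin n, Matrix (Fin d) (Fin (m i)) ℝ) : ℝ :=
  ∑ i, frobSq (F i - G i)

/-- The frame operator `∑ Xᵢ Xᵢᵀ`. -/
noncomputable def frameOp (F : ∀ i : Fin n, Matrix (Fin d) (Fin (m i)) ℝ) :
    Matrix (Fin d) (Fin d) ℝ :=
  ∑ i, F i * (F i)ᵀ

/-- `F` is a matrix frame: `∑ Xᵢ Xᵢᵀ` is positive definite. -/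
def IsMatrixFrame (F : ∀ i : Fin n, Matrix (Fin d) (Fin (m i)) ℝ) : Prop :=
  (frameOp F).PosDef

/-- `F` is an ε-nearly equal-norm Parseval matrix frame. -/
def NearlyENParseval (ε : ℝ) (F : ∀ i : Fin n, Matrix (Fin d) (Fin (m i)) ℝ) : Prop :=
  (frameOp F - (1 - ε) • (1 : Matrix (Fin d) (Fin d) ℝ)).PosSemidef ∧
  ((1 + ε) • (1 : Matrix (Fin d) (Fin d) ℝ) - frameOp F).PosSemidef ∧
  ∀ i, (1 - ε) * ((d : ℝ) / n) ≤ frobSq (F i) ∧ frobSq (F i) ≤ (1 + ε) * ((d : ℝ) / n)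

/-- `F` is an equal-norm Parseval matrix frame. -/
def EqualNormParseval (F : ∀ i : Fin n, Matrix (Fin d) (Fin (m i)) ℝ) : Prop :=
  frameOp F = 1 ∧ ∀ i, frobSq (F i) = (d : ℝ) / n

/-- The columns of the concatenated matrix `[X₁ | … | Xₙ]`. -/
def col (F : ∀ i : Fin n, Matrix (Fin d) (Fin (m i)) ℝ) (p : (i : Fin n) × Fin (m i)) :
    Fin d → ℝ :=
  fun r => F p.1 r p.2

/-- `F` is generic: `n > d` and any `d` of the columns of `[X₁ | … | Xₙ]` are linearly
independent (hence a basis of `ℝ^d`). -/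
def Generic (F : ∀ i : Fin n, Matrix (Fin d) (Fin (m i)) ℝ) : Prop :=
  d < n ∧ ∀ S : Finset ((i : Fin n) × Fin (m i)), S.card = d →
    LinearIndependent ℝ (fun p : S => col F (p : (i : Fin n) × Fin (m i)))

/-- Column span of a matrix. -/
def colSpan {k : ℕ} (X : Matrix (Fin d) (Fin k) ℝ) : Submodule ℝ (Fin d → ℝ) :=
  Submodule.span ℝ (Set.range Xᵀ)

/-- The orbit polytope `K_F` of a tuple of matrices. -/
def orbitPolytope (F : ∀ i : Fin n, Matrix (Fin d) (Fin (m i)) ℝ) : Set (Fin n → ℝ) :=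
  {c | (∀ i, 0 ≤ c i) ∧ (∑ i, c i = d) ∧
    ∀ I : Finset (Fin n),
      ∑ i ∈ I, c i ≤ (Module.finrank ℝ ↥(⨆ i ∈ I, colSpan (F i)) : ℝ)}

/-- `Φ_F(t) = log det (∑ e^{tᵢ} Xᵢ Xᵢᵀ)`. -/
noncomputable def Phi (F : ∀ i : Fin n, Matrix (Fin d) (Fin (m i)) ℝ) (t : Fin n → ℝ) : ℝ :=
  Real.log (∑ i, Real.exp (t i) • (F i * (F i)ᵀ)).det

/-- The objective function `Φ_F(t) - ⟨t, c⟩` whose infimum over `t` is `f_F(c)`. -/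
noncomputable def obj (F : ∀ i : Fin n, Matrix (Fin d) (Fin (m i)) ℝ)
    (c : Fin n → ℝ) (t : Fin n → ℝ) : ℝ :=
  Phi F t - ∑ i, t i * c i

/-- `Δ_S` for `S ∈ 𝒜`, where `S` is encoded as a function `σ` assigning to each `i` a subset
`σ i ⊆ {1,…,dᵢ}` of the columns of `Xᵢ` (with `i ∈ S` iff `σ i ≠ ∅`). -/
noncomputable def Delta (F : ∀ i : Fin n, Matrix (Fin d) (Fin (m i)) ℝ)
    (σ : ∀ i : Fin n, Finset (Fin (m i))) : ℝ :=
  (∑ i, ∑ k ∈ σ i, Matrix.of (fun r s : Fin d => F i r k * F i s k)).det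

/-- The index set `𝒜`: collections of subsets of columns with `d` columns in total. -/
def indexA (d : ℕ) (m : Fin n → ℕ) : Finset (∀ i : Fin n, Finset (Fin (m i))) :=
  Finset.univ.filter fun σ => (∑ i, (σ i).card) = d

/-- Membership in the semialgebraic set `𝕍(F, c)`.  (Summing `(σ i).card • ⋯` over all of
`𝒜` is the same as summing `|Sᵢ| • ⋯` over those `S ∈ 𝒜` with `i ∈ S`.) -/
noncomputable def inVariety (F : ∀ i : Fin n, Matrix (Fin d) (Fin (m i)) ℝ)
    (c ξ : Fin n → ℝ) : Prop :=
  (∀ i, 0 < ξ i) ∧ ∀ i,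
    (∑ σ ∈ indexA d m, ((σ i).card : ℝ) * (∏ l, ξ l ^ (σ l).card) * Delta F σ)
      = c i * ∑ σ ∈ indexA d m, (∏ l, ξ l ^ (σ l).card) * Delta F σ

/-- `A` transforms `(F, c)` into a radial isotropic frame. -/
noncomputable def TransformsToRIF (F : ∀ i : Fin n, Matrix (Fin d) (Fin (m i)) ℝ)
    (c : Fin n → ℝ) (A : Matrix (Fin d) (Fin d) ℝ) : Prop :=
  ∑ i, (c i / frobSq (A * F i)) • ((A * F i) * (A * F i)ᵀ) = 1

/-- Columns of `X` all orthogonal to the subspace `T`, i.e. `Col(X) ⊆ T^⊥`. -/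
def colsPerp {k : ℕ} (X : Matrix (Fin d) (Fin k) ℝ) (T : Submodule ℝ (Fin d → ℝ)) : Prop :=
  ∀ x ∈ T, Xᵀ.mulVec x = 0

end MFrames

open Finset Real

theorem injective_of_image_univ_eq {n ι : Type*} [Fintype n] [DecidableEq ι] {f : n → ι}
    {S : Finset ι} (hS : #S = Fintype.card n) (hf : univ.image f = S) : Function.Injective f := by
  rw [← Set.injOn_univ, ← coe_univ, ← card_image_iff, hf, hS, card_univ]

namespace Matrix

variable {R n ι : Type*} [CommRing R] [Fintype n] [DecidableEq n]

def gramTerm (v : ι → n → R) (f : n → ι) : R :=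
  (∏ r, v (f r) r) * (of fun r => v (f r)).det

theorem gramTerm_eq_zero_of_not_injective (v : ι → n → R) {f : n → ι}
    (hf : ¬ Function.Injective f) : gramTerm v f = 0 := by
  obtain ⟨r, s, hrs, hne⟩ : ∃ r s, f r = f s ∧ r ≠ s := by
    simpa [Function.Injective] using hf
  rw [gramTerm, det_zero_of_row_eq hne (congrArg v hrs), mul_zero]

variable [Fintype ι]

theorem det_sum_smul_vecMulVec_eq_sum_gramTerm (w : ι → R) (v : ι → n → R) :
    (∑ p, w p • vecMulVec (v p) (v p)).det = ∑ f : n → ι, (∏ r, w (f r)) * gramTerm v f := by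
  have hrows : ∑ p, w p • vecMulVec (v p) (v p) = fun r => ∑ p, (w p * v p r) • v p := by
    ext r s
    simp [sum_apply, vecMulVec_apply, mul_assoc]
  rw [hrows]
  change detRowAlternating.toMultilinearMap _ = _
  rw [MultilinearMap.map_sum]
  refine sum_congr rfl fun f _ => ?_
  rw [MultilinearMap.map_smul_univ, gramTerm, prod_mul_distrib, smul_eq_mul, mul_assoc]
  rfl

variable [DecidableEq ι]

def gramFiber (v : ι → n → R) (S : Finset ι) : R :=
  ∑ f with univ.image f = S, gramTerm v f

theorem det_sum_smul_vecMulVec_eq_sum_gramFiber (w : ι → R) (v : ι → n → R) :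
    (∑ p, w p • vecMulVec (v p) (v p)).det
      = ∑ S ∈ univ.powersetCard (Fintype.card n), (∏ p ∈ S, w p) * gramFiber v S := by
  rw [det_sum_smul_vecMulVec_eq_sum_gramTerm, ← sum_fiberwise univ (fun f => univ.image f),
    ← sum_subset (subset_univ (univ.powersetCard (Fintype.card n)))]
  · refine sum_congr rfl fun S hS => ?_
    rw [gramFiber, mul_sum]
    refine sum_congr rfl fun f hf => ?_
    have himage : univ.image f = S := (mem_filter.1 hf).2
    have hinj := injective_of_image_univ_eq (mem_powersetCard.1 hS).2 himage
    rw [← himage, prod_image hinj.injOn]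
  · intro S _ hS
    refine sum_eq_zero fun f hf => ?_
    rw [gramTerm_eq_zero_of_not_injective, mul_zero]
    intro hinj
    rw [← (mem_filter.1 hf).2] at hS
    exact hS (mem_powersetCard.2 ⟨subset_univ _, by rw [card_image_of_injective _ hinj, card_univ]⟩)

theorem det_sum_vecMulVec_eq_gramFiber (v : ι → n → R) {S : Finset ι}
    (hS : #S = Fintype.card n) :
    (∑ p ∈ S, vecMulVec (v p) (v p)).det = gramFiber v S := by
  have hind : ∑ p ∈ S, vecMulVec (v p) (v p)
      = ∑ p, (if p ∈ S then 1 else 0 : R) • vecMulVec (v p) (v p) := by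
    simp [ite_smul, sum_ite_mem]
  rw [hind, det_sum_smul_vecMulVec_eq_sum_gramFiber, sum_eq_single S]
  · simp [prod_boole]
  · intro T hT hTS
    obtain ⟨p, hpT, hpS⟩ := not_subset.1 fun h =>
      hTS (eq_of_subset_of_card_le h (by rw [hS, (mem_powersetCard.1 hT).2]))
    rw [prod_eq_zero hpT (if_neg hpS), zero_mul]
  · exact fun h => absurd (mem_powersetCard.2 ⟨subset_univ _, hS⟩) h

/-- Cauchy–Binet formula for a weighted sum of rank-one Gram matrices. -/
theorem det_sum_smul_vecMulVec_self (w : ι → R) (v : ι → n → R) :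
    (∑ p, w p • vecMulVec (v p) (v p)).det
      = ∑ S ∈ univ.powersetCard (Fintype.card n),
          (∏ p ∈ S, w p) * (∑ p ∈ S, vecMulVec (v p) (v p)).det := by
  rw [det_sum_smul_vecMulVec_eq_sum_gramFiber]
  exact sum_congr rfl fun S hS => by
    rw [det_sum_vecMulVec_eq_gramFiber v (mem_powersetCard.1 hS).2]

end Matrix

theorem sum_exp_dotProduct_le_of_gradient_eq_zero {α ι : Type*} [Fintype ι] {A : Finset α}
    {a : α → ℝ} (ha : ∀ σ ∈ A, 0 ≤ a σ) (b : α → ι → ℝ) {t₀ : ι → ℝ}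
    (hgrad : ∀ i, ∑ σ ∈ A, a σ * b σ i * exp (t₀ ⬝ᵥ b σ) = 0) (t : ι → ℝ) :
    ∑ σ ∈ A, a σ * exp (t₀ ⬝ᵥ b σ) ≤ ∑ σ ∈ A, a σ * exp (t ⬝ᵥ b σ) := by
  have hlin : ∑ σ ∈ A, a σ * exp (t₀ ⬝ᵥ b σ) * ((t - t₀) ⬝ᵥ b σ) = 0 := by
    calc ∑ σ ∈ A, a σ * exp (t₀ ⬝ᵥ b σ) * ((t - t₀) ⬝ᵥ b σ)
        = ∑ i, (t - t₀) i * ∑ σ ∈ A, a σ * b σ i * exp (t₀ ⬝ᵥ b σ) := by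
          simp only [dotProduct, mul_sum]
          rw [sum_comm]
          exact sum_congr rfl fun i _ => sum_congr rfl fun σ _ => by ring
      _ = 0 := by simp [hgrad]
  have htangent : ∀ σ ∈ A, a σ * exp (t₀ ⬝ᵥ b σ) * ((t - t₀) ⬝ᵥ b σ + 1)
      ≤ a σ * exp (t ⬝ᵥ b σ) := by
    intro σ hσ
    have h := add_one_le_exp ((t - t₀) ⬝ᵥ b σ)
    rw [sub_dotProduct, exp_sub, le_div_iff₀ (exp_pos _), ← sub_dotProduct] at h
    rw [mul_assoc]
    exact mul_le_mul_of_nonneg_left (by linarith) (ha σ hσ)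
  calc ∑ σ ∈ A, a σ * exp (t₀ ⬝ᵥ b σ)
      = ∑ σ ∈ A, a σ * exp (t₀ ⬝ᵥ b σ) * ((t - t₀) ⬝ᵥ b σ + 1) := by
        simp only [mul_add, mul_one, sum_add_distrib, hlin, zero_add]
    _ ≤ ∑ σ ∈ A, a σ * exp (t ⬝ᵥ b σ) := sum_le_sum htangent

theorem gradient_eq_zero_of_sum_exp_dotProduct_le {α ι : Type*} [Fintype ι] [DecidableEq ι]
    (A : Finset α) (a : α → ℝ) (b : α → ι → ℝ) {t₀ : ι → ℝ}
    (hmin : ∀ t, ∑ σ ∈ A, a σ * exp (t₀ ⬝ᵥ b σ) ≤ ∑ σ ∈ A, a σ * exp (t ⬝ᵥ b σ)) (i : ι) :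
    ∑ σ ∈ A, a σ * b σ i * exp (t₀ ⬝ᵥ b σ) = 0 := by
  set h : ℝ → ℝ := fun u => ∑ σ ∈ A, a σ * exp (t₀ ⬝ᵥ b σ + u * b σ i)
  have hline : ∀ u, h u = ∑ σ ∈ A, a σ * exp ((t₀ + u • Pi.single i 1) ⬝ᵥ b σ) := fun u => by
    simp [h, add_dotProduct, smul_dotProduct, single_dotProduct]
  have hlocal : IsLocalMin h 0 := Filter.Eventually.of_forall fun u => by
    rw [hline, hline, zero_smul, add_zero]
    exact hmin _
  have hderiv : HasDerivAt h (∑ σ ∈ A, a σ * (exp (t₀ ⬝ᵥ b σ + 0 * b σ i) * b σ i)) 0 :=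
    HasDerivAt.fun_sum fun σ _ =>
      (((hasDerivAt_mul_const (b σ i)).const_add _).exp).const_mul (a σ)
  rw [← hlocal.hasDerivAt_eq_zero hderiv]
  exact sum_congr rfl fun σ _ => by simp only [zero_mul, add_zero]; ring

namespace MFrames

open Matrix

variable {d n : ℕ} {m : Fin n → ℕ}

theorem sum_smul_mul_transpose_eq_sum_vecMulVec (F : ∀ i : Fin n, Matrix (Fin d) (Fin (m i)) ℝ)
    (ξ : Fin n → ℝ) :
    ∑ i, ξ i • (F i * (F i)ᵀ) = ∑ p, ξ p.1 • vecMulVec (col F p) (col F p) := by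
  rw [← univ_sigma_univ, sum_sigma]
  ext r s
  simp [Matrix.sum_apply, Matrix.mul_apply, vecMulVec_apply, col, mul_sum]

theorem Delta_eq_det_sum_vecMulVec (F : ∀ i : Fin n, Matrix (Fin d) (Fin (m i)) ℝ)
    (σ : ∀ i : Fin n, Finset (Fin (m i))) :
    Delta F σ = (∑ p ∈ univ.sigma σ, vecMulVec (col F p) (col F p)).det := by
  rw [Delta, sum_sigma]
  rfl

theorem Delta_nonneg (F : ∀ i : Fin n, Matrix (Fin d) (Fin (m i)) ℝ)
    (σ : ∀ i : Fin n, Finset (Fin (m i))) : 0 ≤ Delta F σ := by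
  rw [Delta_eq_det_sum_vecMulVec]
  refine (posSemidef_sum _ fun p _ => ?_).det_nonneg
  simpa using posSemidef_vecMulVec_self_star (col F p)

theorem det_sum_smul_mul_transpose (F : ∀ i : Fin n, Matrix (Fin d) (Fin (m i)) ℝ)
    (ξ : Fin n → ℝ) :
    (∑ i, ξ i • (F i * (F i)ᵀ)).det = ∑ σ ∈ indexA d m, (∏ l, ξ l ^ #(σ l)) * Delta F σ := by
  rw [sum_smul_mul_transpose_eq_sum_vecMulVec, det_sum_smul_vecMulVec_self, Fintype.card_fin]
  symm
  refine sum_nbij' (fun σ => univ.sigma σ) (fun S i => {k | ⟨i, k⟩ ∈ S}) ?_ ?_ ?_ ?_ ?_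
  · intro σ hσ
    simpa [indexA, card_sigma] using hσ
  · intro S hS
    have hsigma : univ.sigma (fun i => {k | ⟨i, k⟩ ∈ S}) = S := by
      ext ⟨i, k⟩
      simp
    simpa [indexA, ← card_sigma, hsigma] using hS
  · intro σ _
    ext i k
    simp
  · intro S _
    ext ⟨i, k⟩
    simp
  · intro σ _
    rw [Delta_eq_det_sum_vecMulVec, prod_sigma]
    simp [prod_const]

def exponent (c : Fin n → ℝ) (σ : ∀ i : Fin n, Finset (Fin (m i))) : Fin n → ℝ :=
  (fun l => (#(σ l) : ℝ)) - c

theorem exp_dotProduct_exponent (c t : Fin n → ℝ) (σ : ∀ i : Fin n, Finset (Fin (m i))) :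
    exp (t ⬝ᵥ exponent c σ) = (∏ l, exp (t l) ^ #(σ l)) * exp (-(t ⬝ᵥ c)) := by
  rw [exponent, dotProduct_sub, sub_eq_add_neg, exp_add, dotProduct, exp_sum]
  congr 1
  exact prod_congr rfl fun l _ => by rw [← exp_nat_mul, mul_comm]

theorem det_sum_exp_smul_mul_exp_neg (F : ∀ i : Fin n, Matrix (Fin d) (Fin (m i)) ℝ)
    (c t : Fin n → ℝ) :
    (∑ i, exp (t i) • (F i * (F i)ᵀ)).det * exp (-(t ⬝ᵥ c))
      = ∑ σ ∈ indexA d m, Delta F σ * exp (t ⬝ᵥ exponent c σ) := by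
  rw [det_sum_smul_mul_transpose, sum_mul]
  exact sum_congr rfl fun σ _ => by rw [exp_dotProduct_exponent]; ring

theorem det_sum_exp_smul_pos {F : ∀ i : Fin n, Matrix (Fin d) (Fin (m i)) ℝ}
    (hF : IsMatrixFrame F) (t : Fin n → ℝ) : 0 < (∑ i, exp (t i) • (F i * (F i)ᵀ)).det := by
  have hframe : 0 < ∑ σ ∈ indexA d m, Delta F σ := by
    have h := det_sum_smul_mul_transpose F 1
    simp only [Pi.one_apply, one_smul, one_pow, prod_const_one, one_mul] at h
    exact h ▸ PosDef.det_pos hF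
  obtain ⟨σ₀, hσ₀, hne⟩ := exists_ne_zero_of_sum_ne_zero hframe.ne'
  have hpos := (Delta_nonneg F σ₀).lt_of_ne' hne
  rw [det_sum_smul_mul_transpose]
  exact sum_pos' (fun σ _ => by have := Delta_nonneg F σ; positivity)
    ⟨σ₀, hσ₀, by positivity⟩

theorem obj_eq_log_sum_Delta_mul_exp {F : ∀ i : Fin n, Matrix (Fin d) (Fin (m i)) ℝ}
    (hF : IsMatrixFrame F) (c t : Fin n → ℝ) :
    obj F c t = log (∑ σ ∈ indexA d m, Delta F σ * exp (t ⬝ᵥ exponent c σ)) := by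
  rw [← det_sum_exp_smul_mul_exp_neg, log_mul (det_sum_exp_smul_pos hF t).ne' (exp_ne_zero _),
    log_exp, obj, Phi, dotProduct, sub_eq_add_neg]

theorem inVariety_exp_iff (F : ∀ i : Fin n, Matrix (Fin d) (Fin (m i)) ℝ) (c t : Fin n → ℝ) :
    inVariety F c (fun i => exp (t i)) ↔ ∀ i, ∑ σ ∈ indexA d m,
      Delta F σ * exponent c σ i * exp (t ⬝ᵥ exponent c σ) = 0 := by
  rw [inVariety, and_iff_right fun i => exp_pos (t i)]
  refine forall_congr' fun i => ?_
  have hgrad : ∑ σ ∈ indexA d m,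
      Delta F σ * exponent c σ i * exp (t ⬝ᵥ exponent c σ)
      = ((∑ σ ∈ indexA d m, (#(σ i) : ℝ) * (∏ l, exp (t l) ^ #(σ l)) * Delta F σ)
        - c i * ∑ σ ∈ indexA d m, (∏ l, exp (t l) ^ #(σ l)) * Delta F σ) * exp (-(t ⬝ᵥ c)) := by
    rw [mul_sum, ← sum_sub_distrib, sum_mul]
    exact sum_congr rfl fun σ _ => by rw [exp_dotProduct_exponent, exponent, Pi.sub_apply]; ring
  rw [hgrad, mul_eq_zero, sub_eq_zero, or_iff_left (exp_ne_zero _)]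

theorem f_attained_iff_variety_general {d n : ℕ} {m : Fin n → ℕ}
    (F : ∀ i : Fin n, Matrix (Fin d) (Fin (m i)) ℝ) (hF : IsMatrixFrame F)
    (c : Fin n → ℚ)
    (tstar : Fin n → ℝ) :
    (∀ s : Fin n → ℝ, obj F (fun i => (c i : ℝ)) tstar ≤ obj F (fun i => (c i : ℝ)) s) ↔
      inVariety F (fun i => (c i : ℝ)) (fun i => Real.exp (tstar i)) := by
  have hpos : ∀ t, 0 < ∑ σ ∈ indexA d m,
      Delta F σ * exp (t ⬝ᵥ exponent (fun i => (c i : ℝ)) σ) := fun t => by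
    rw [← det_sum_exp_smul_mul_exp_neg]
    exact mul_pos (det_sum_exp_smul_pos hF t) (exp_pos _)
  simp_rw [obj_eq_log_sum_Delta_mul_exp hF, log_le_log_iff (hpos _) (hpos _), inVariety_exp_iff]
  exact ⟨gradient_eq_zero_of_sum_exp_dotProduct_le _ _ _,
    sum_exp_dotProduct_le_of_gradient_eq_zero (fun σ _ => Delta_nonneg F σ) _⟩

/-- **Theorem (Constructive aspects of RIFs), equivalence (1) ⟺ (2).**  For a matrix frame
`F`, positive rational weights `c` with `∑ cᵢ = d` and `t* ∈ ℝⁿ`: the infimum defining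
`f_F(c)` is finite and attained at `t*` if and only if `(e^{t*₁}, …, e^{t*ₙ}) ∈ 𝕍(F, c)`. -/
theorem f_attained_iff_variety {d n : ℕ} {m : Fin n → ℕ}
    (F : ∀ i : Fin n, Matrix (Fin d) (Fin (m i)) ℝ) (hF : IsMatrixFrame F)
    (c : Fin n → ℚ) (hc : ∀ i, 0 < c i) (hsum : ∑ i, (c i : ℝ) = d)
    (tstar : Fin n → ℝ) :
    (∀ s : Fin n → ℝ, obj F (fun i => (c i : ℝ)) tstar ≤ obj F (fun i => (c i : ℝ)) s) ↔
      inVariety F (fun i => (c i : ℝ)) (fun i => Real.exp (tstar i)) :=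
  f_attained_iff_variety_general F hF c tstar

end MFrames
end

section
/- Let F = (X_1, …, X_n) with X_i ∈ ℝ^{d×d_i} be a matrix frame, c = (c_1,…,c_n) ∈ ℚ^n_{>0} with ∑_{i=1}^n c_i = d, and t* ∈ ℝ^n such that (e^{t*_1},…,e^{t*_n}) ∈ 𝕍(F,c). Set Q(t*) = ∑_{i=1}^n e^{t*_i} X_i·X_iᵀ and let Q(t*)^{−1/2} be the inverse of the positive-definite square root of Q(t*). Then Q(t*)^{−1/2} transforms (F,c) into a radial isotropic frame, i.e. each Q(t*)^{−1/2}·X_i is nonzero and ∑_{i=1}^n c_i·(Q(t*)^{−1/2}·X_i)(Q(t*)^{−1/2}·X_i)ᵀ/‖Q(t*)^{−1/2}·X_i‖_F² = I_d. -/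
open scoped BigOperators
open Matrix

/-- The positive semidefinite square root of a positive semidefinite matrix (removed from
Mathlib; restated here with its former definition). -/
noncomputable def Matrix.PosSemidef.sqrt {n 𝕜 : Type*} [Fintype n] [RCLike 𝕜] [PartialOrder 𝕜] [DecidableEq n]
    {A : Matrix n n 𝕜} (hA : A.PosSemidef) : Matrix n n 𝕜 :=
  hA.1.eigenvectorUnitary.1 * diagonal ((↑) ∘ (√·) ∘ hA.1.eigenvalues) *
  (star hA.1.eigenvectorUnitary : Matrix n n 𝕜)

/-!
Write `ξ = e^{t*}` and `Q(ξ) = ∑ ξᵢ XᵢXᵢᵀ`. By Cauchy–Binet, `det Q(ξ) = ∑_{S ∈ 𝒜} ξ^S Δ_S`, so the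
left-hand side of the `i`-th equation defining `𝕍(F, c)` is `ξᵢ ∂ det Q / ∂ξᵢ`, which by Jacobi's
formula equals `ξᵢ det Q · tr(Q⁻¹ XᵢXᵢᵀ)`. Since `F` is a frame, `det Q > 0`, and the equations say
`ξᵢ ‖Q^{-1/2} Xᵢ‖_F² = cᵢ`. Hence the weights `cᵢ / ‖Q^{-1/2} Xᵢ‖_F²` are exactly the `ξᵢ`, and the
transformed frame operator is `Q^{-1/2} Q Q^{-1/2} = I`.
-/

open Finset

namespace Matrix

section CauchyBinet

variable {R : Type*} [CommRing R] {d : ℕ} {P : Type*} [Fintype P]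

theorem det_mul_eq_sum_det_submatrix_mul_prod (M : Matrix (Fin d) P R) (N : Matrix P (Fin d) R) :
    (M * N).det = ∑ f : Fin d → P, (M.submatrix id f).det * ∏ i, N (f i) i := by
  simp only [det_apply', mul_apply, prod_univ_sum, mul_sum, Fintype.piFinset_univ]
  rw [sum_comm]
  refine sum_congr rfl fun f _ => ?_
  rw [sum_mul]
  refine sum_congr rfl fun σ _ => ?_
  rw [prod_mul_distrib, mul_assoc]
  rfl

/-- Cauchy–Binet, summed over all maps `Fin d → P` rather than over `d`-subsets of `P`, so that
each subset occurs `d!` times. -/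
theorem factorial_mul_det_mul (M : Matrix (Fin d) P R) (N : Matrix P (Fin d) R) :
    (d.factorial : R) * (M * N).det
      = ∑ f : Fin d → P, (M.submatrix id f).det * (N.submatrix f id).det := by
  have reindex : ∀ τ : Equiv.Perm (Fin d), (M * N).det = ∑ f : Fin d → P,
      (M.submatrix id f).det * ((Equiv.Perm.sign τ : ℤ) * ∏ i, N (f (τ i)) i) := by
    intro τ
    rw [det_mul_eq_sum_det_submatrix_mul_prod, eq_comm,
      ← (Equiv.arrowCongr τ (Equiv.refl P)).sum_comp]
    refine sum_congr rfl fun g _ => ?_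
    have hperm : M.submatrix id (g ∘ τ.symm) = (M.submatrix id g).submatrix id τ.symm := rfl
    have hsign : ((Equiv.Perm.sign τ : ℤ) : R) * (Equiv.Perm.sign τ : ℤ) = 1 := by
      rcases Int.units_eq_one_or (Equiv.Perm.sign τ) with h | h <;> simp [h]
    have hE : Equiv.arrowCongr τ (Equiv.refl P) g = g ∘ τ.symm := rfl
    have hprod : ∏ i, N ((g ∘ τ.symm) (τ i)) i = ∏ i, N (g i) i := by simp
    rw [hE, hprod, hperm, det_permute', Equiv.Perm.sign_symm]
    linear_combination (M.submatrix id g).det * (∏ i, N (g i) i) * hsign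
  calc (d.factorial : R) * (M * N).det
      = ∑ τ : Equiv.Perm (Fin d), (M * N).det := by
        rw [sum_const, card_univ, Fintype.card_perm, Fintype.card_fin, nsmul_eq_mul]
    _ = ∑ f : Fin d → P, (M.submatrix id f).det
          * ∑ τ : Equiv.Perm (Fin d), (Equiv.Perm.sign τ : ℤ) * ∏ i, N (f (τ i)) i := by
        rw [sum_congr rfl fun τ _ => reindex τ, sum_comm]
        simp only [mul_sum]
    _ = ∑ f : Fin d → P, (M.submatrix id f).det * (N.submatrix f id).det := by
        simp only [det_apply' (N.submatrix _ id)]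
        rfl

end CauchyBinet

section RankOneSum

variable {R : Type*} [CommRing R] {d : ℕ} {P : Type*} [Fintype P]

theorem factorial_mul_det_sum_smul_vecMulVec (v : P → Fin d → R) (w : P → R) :
    (d.factorial : R) * (∑ p, w p • vecMulVec (v p) (v p)).det
      = ∑ f : Fin d → P, (∏ r, w (f r)) * (of (v ∘ f)).det ^ 2 := by
  have hfactor : ∑ p, w p • vecMulVec (v p) (v p) = (of v)ᵀ * of fun p s => w p * v p s := by
    ext r s
    simp only [sum_apply, smul_apply, vecMulVec_apply, smul_eq_mul, mul_apply, transpose_apply,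
      of_apply]
    exact sum_congr rfl fun p _ => by ring
  rw [hfactor, factorial_mul_det_mul]
  refine sum_congr rfl fun f _ => ?_
  have hrows : (of fun p s => w p * v p s).submatrix f id
      = of fun r s => w (f r) * of (v ∘ f) r s := rfl
  have hcols : (of v)ᵀ.submatrix id f = (of (v ∘ f))ᵀ := rfl
  rw [hrows, hcols, det_mul_column, det_transpose]
  ring

theorem sum_powersetCard_ite_forall_mem [DecidableEq P] {f : Fin d → P}
    (hf : Function.Injective f) (g : Finset P → R) :
    ∑ S ∈ powersetCard d univ, (if ∀ r, f r ∈ S then g S else 0) = g (univ.image f) := by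
  have hcard : (univ.image f).card = d := by
    rw [card_image_of_injective _ hf, card_univ, Fintype.card_fin]
  rw [sum_eq_single_of_mem (univ.image f) (mem_powersetCard.2 ⟨subset_univ _, hcard⟩),
    if_pos fun r => mem_image_of_mem f (mem_univ r)]
  intro S hS hne
  refine if_neg fun hsub => hne (eq_of_subset_of_card_le ?_ ?_).symm
  · exact fun p hp => by obtain ⟨r, -, rfl⟩ := mem_image.1 hp; exact hsub r
  · rw [hcard, (mem_powersetCard.1 hS).2]

theorem det_sum_smul_vecMulVec [DecidableEq P] [IsDomain R] [CharZero R]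
    (v : P → Fin d → R) (w : P → R) :
    (∑ p, w p • vecMulVec (v p) (v p)).det
      = ∑ S ∈ powersetCard d univ, (∏ p ∈ S, w p) * (∑ p ∈ S, vecMulVec (v p) (v p)).det := by
  refine mul_left_cancel₀ (Nat.cast_ne_zero.2 d.factorial_ne_zero : (d.factorial : R) ≠ 0) ?_
  have hsubset : ∀ S : Finset P, (d.factorial : R) * (∑ p ∈ S, vecMulVec (v p) (v p)).det
      = ∑ f : Fin d → P, (if ∀ r, f r ∈ S then 1 else 0) * (of (v ∘ f)).det ^ 2 := by
    intro S
    have hind : ∑ p ∈ S, vecMulVec (v p) (v p)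
        = ∑ p, (if p ∈ S then 1 else 0 : R) • vecMulVec (v p) (v p) := by
      simp [ite_smul]
    simp only [hind, factorial_mul_det_sum_smul_vecMulVec, prod_boole,
      mem_univ, forall_const]
  have hterm : ∀ f : Fin d → P, (∏ r, w (f r)) * (of (v ∘ f)).det ^ 2
      = ∑ S ∈ powersetCard d univ,
          (∏ p ∈ S, w p) * ((if ∀ r, f r ∈ S then 1 else 0) * (of (v ∘ f)).det ^ 2) := by
    intro f
    by_cases hf : Function.Injective f
    · simp only [mul_ite, ite_mul, one_mul, mul_zero, zero_mul]
      rw [sum_powersetCard_ite_forall_mem hf, prod_image fun a _ b _ h => hf h]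
    · obtain ⟨a, b, hab, hne⟩ := Function.not_injective_iff.1 hf
      have hdet : (of (v ∘ f)).det = 0 := det_zero_of_row_eq hne (congrArg v hab)
      simp [hdet]
  rw [factorial_mul_det_sum_smul_vecMulVec, sum_congr rfl fun f _ => hterm f, sum_comm, mul_sum]
  refine sum_congr rfl fun S _ => ?_
  rw [← mul_sum, mul_left_comm, hsubset]

end RankOneSum

section Jacobi

open Polynomial

variable {𝕜 : Type*} [NontriviallyNormedField 𝕜] {ι : Type*} [Fintype ι] [DecidableEq ι]

theorem hasDerivAt_det_one_add_smul (M : Matrix ι ι 𝕜) :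
    HasDerivAt (fun t : 𝕜 => (1 + t • M).det) M.trace 0 := by
  have heval : ∀ t : 𝕜, (1 + t • M).det = (det (1 + (X : 𝕜[X]) • M.map C)).eval t := by
    intro t
    rw [← coe_evalRingHom, RingHom.map_det]
    congr 1
    ext r s
    by_cases h : r = s <;> simp [h] <;> ring
  simp only [heval]
  exact ((det (1 + (X : 𝕜[X]) • M.map C)).hasDerivAt 0).congr_deriv
    (derivative_det_one_add_X_smul M)

theorem hasDerivAt_det_add_smul {Q : Matrix ι ι 𝕜} (hQ : IsUnit Q.det) (B : Matrix ι ι 𝕜) :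
    HasDerivAt (fun t : 𝕜 => (Q + t • B).det) (Q.det * (Q⁻¹ * B).trace) 0 := by
  have hfactor : ∀ t : 𝕜, Q + t • B = Q * (1 + t • (Q⁻¹ * B)) := fun t => by
    rw [Matrix.mul_add, Matrix.mul_one, Matrix.mul_smul, ← Matrix.mul_assoc,
      mul_nonsing_inv Q hQ, Matrix.one_mul]
  simp only [hfactor, det_mul]
  exact (hasDerivAt_det_one_add_smul _).const_mul _

end Jacobi

theorem posDef_sum_smul {ι n : Type*} [Fintype ι] [Fintype n] {B : ι → Matrix n n ℝ}
    (hB : ∀ l, (B l).PosSemidef) (hsum : (∑ l, B l).PosDef) {ξ : ι → ℝ} (hξ : ∀ l, 0 < ξ l) :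
    (∑ l, ξ l • B l).PosDef := by
  have hpsd : (∑ l, ξ l • B l).PosSemidef :=
    posSemidef_sum _ fun l _ => (hB l).smul (hξ l).le
  refine .of_dotProduct_mulVec_pos hpsd.isHermitian fun x hx => ?_
  have hq := hsum.dotProduct_mulVec_pos hx
  rw [sum_mulVec, dotProduct_sum] at hq ⊢
  obtain ⟨l, -, hl⟩ : ∃ l ∈ univ, 0 < star x ⬝ᵥ B l *ᵥ x :=
    exists_lt_of_sum_lt (by rwa [sum_const_zero])
  simp only [smul_mulVec, dotProduct_smul, smul_eq_mul]
  exact sum_pos' (fun l _ => mul_nonneg (hξ l).le ((hB l).dotProduct_mulVec_nonneg x))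
    ⟨l, mem_univ l, mul_pos (hξ l) hl⟩

theorem PosSemidef.sqrt_mul_self {ι : Type*} [Fintype ι] [DecidableEq ι] {A : Matrix ι ι ℝ}
    (hA : A.PosSemidef) : hA.sqrt * hA.sqrt = A := by
  have hU : (star hA.1.eigenvectorUnitary : Matrix ι ι ℝ) * hA.1.eigenvectorUnitary = 1 :=
    Unitary.coe_star_mul_self _
  conv_rhs => rw [hA.1.spectral_theorem, Unitary.conjStarAlgAut_apply]
  simp only [PosSemidef.sqrt, Matrix.mul_assoc]
  rw [← Matrix.mul_assoc (star _ : Matrix ι ι ℝ), hU, Matrix.one_mul,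
    ← Matrix.mul_assoc (diagonal _), diagonal_mul_diagonal]
  congr 3
  funext j
  simp [Real.mul_self_sqrt (hA.eigenvalues_nonneg j)]

theorem PosSemidef.isHermitian_sqrt {𝕜 ι : Type*} [RCLike 𝕜] [PartialOrder 𝕜] [Fintype ι]
    [DecidableEq ι] {A : Matrix ι ι 𝕜} (hA : A.PosSemidef) : hA.sqrt.IsHermitian := by
  simp [IsHermitian, PosSemidef.sqrt, Matrix.mul_assoc, star_eq_conjTranspose, Pi.star_def,
    Function.comp_def]

end Matrix

namespace MFrames

theorem frobSq_eq_trace {α β : Type*} [Fintype α] [Fintype β] (X : Matrix α β ℝ) :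
    frobSq X = (X * Xᵀ).trace := by
  simp only [frobSq, trace, Matrix.diag, mul_apply, transpose_apply, sq]

theorem trace_inv_mul_self_mul_eq_frobSq {α β : Type*} [Fintype α] [DecidableEq α] [Fintype β]
    {S : Matrix α α ℝ} (hS : Sᵀ = S) (X : Matrix α β ℝ) :
    ((S * S)⁻¹ * (X * Xᵀ)).trace = frobSq (S⁻¹ * X) := by
  rw [frobSq_eq_trace, transpose_mul, transpose_nonsing_inv, hS, Matrix.mul_inv_rev,
    ← Matrix.mul_assoc (S⁻¹ * X), trace_mul_comm _ S⁻¹]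
  simp only [Matrix.mul_assoc]

section Frame

variable {d n : ℕ} {m : Fin n → ℕ}

theorem sum_smul_mul_transpose_eq_sum_vecMulVec_col
    (F : ∀ i : Fin n, Matrix (Fin d) (Fin (m i)) ℝ) (ξ : Fin n → ℝ) :
    ∑ l, ξ l • (F l * (F l)ᵀ)
      = ∑ p : (i : Fin n) × Fin (m i), ξ p.1 • vecMulVec (col F p) (col F p) := by
  rw [← univ_sigma_univ, sum_sigma]
  refine sum_congr rfl fun l _ => ?_
  ext r s
  simp [mul_apply, Matrix.sum_apply, mul_sum, vecMulVec_apply, col]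

/-- The `d`-subsets of the columns of `[X₁ | … | Xₙ]` are exactly the `σ ∈ 𝒜`, via
`σ ↦ ⋃ᵢ {i} × σᵢ`. -/
theorem det_sum_smul_eq_sum_indexA (F : ∀ i : Fin n, Matrix (Fin d) (Fin (m i)) ℝ)
    (ξ : Fin n → ℝ) :
    (∑ l, ξ l • (F l * (F l)ᵀ)).det
      = ∑ σ ∈ indexA d m, (∏ l, ξ l ^ (σ l).card) * Delta F σ := by
  classical
  rw [sum_smul_mul_transpose_eq_sum_vecMulVec_col, det_sum_smul_vecMulVec]
  have hleft_inv : ∀ σ : ∀ i, Finset (Fin (m i)),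
      (fun i => univ.filter fun k => (⟨i, k⟩ : (i : Fin n) × Fin (m i)) ∈ univ.sigma σ) = σ := by
    intro σ; funext i; ext k; simp
  have hright_inv : ∀ S : Finset ((i : Fin n) × Fin (m i)),
      univ.sigma (fun i => univ.filter fun k => (⟨i, k⟩ : (i : Fin n) × Fin (m i)) ∈ S) = S := by
    intro S; ext ⟨i, k⟩; simp
  symm
  refine sum_nbij' (fun σ => univ.sigma σ) (fun S i => univ.filter fun k => ⟨i, k⟩ ∈ S)
    ?_ ?_ (fun σ _ => hleft_inv σ) (fun S _ => hright_inv S) ?_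
  · intro σ hσ
    simpa [indexA, card_sigma] using hσ
  · intro S hS
    have hcard := congrArg card (hright_inv S)
    rw [card_sigma] at hcard
    simpa [indexA, hcard] using hS
  · intro σ _
    rw [prod_sigma, sum_sigma]
    simp only [prod_const, Delta]
    rfl

theorem posDef_sum_smul_mul_transpose {F : ∀ i : Fin n, Matrix (Fin d) (Fin (m i)) ℝ}
    (hF : IsMatrixFrame F) {ξ : Fin n → ℝ} (hξ : ∀ l, 0 < ξ l) :
    (∑ l, ξ l • (F l * (F l)ᵀ)).PosDef :=
  posDef_sum_smul (fun l => by simpa using posSemidef_self_mul_conjTranspose (F l)) hF hξ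

/-- The `|Sᵢ|`-weighted sum in the definition of `𝕍(F, c)` is `ξᵢ ∂/∂ξᵢ det Q(ξ)`, which Jacobi's
formula evaluates. -/
theorem sum_card_mul_prod_pow_mul_Delta (F : ∀ i : Fin n, Matrix (Fin d) (Fin (m i)) ℝ)
    {ξ : Fin n → ℝ} (hQ : IsUnit (∑ l, ξ l • (F l * (F l)ᵀ)).det) (i : Fin n) :
    ∑ σ ∈ indexA d m, ((σ i).card : ℝ) * (∏ l, ξ l ^ (σ l).card) * Delta F σ
      = ξ i * ((∑ l, ξ l • (F l * (F l)ᵀ)).det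
          * ((∑ l, ξ l • (F l * (F l)ᵀ))⁻¹ * (F i * (F i)ᵀ)).trace) := by
  set B : Fin n → Matrix (Fin d) (Fin d) ℝ := fun l => F l * (F l)ᵀ
  set Q := ∑ l, ξ l • B l
  set r : (∀ i, Finset (Fin (m i))) → ℝ :=
    fun σ => (∏ l ∈ univ.erase i, ξ l ^ (σ l).card) * Delta F σ
  have hline : ∀ s, (Q + (s - ξ i) • B i).det = ∑ σ ∈ indexA d m, s ^ (σ i).card * r σ := by
    intro s
    have hupdate : ∑ l, Function.update ξ i s l • B l = Q + (s - ξ i) • B i := by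
      have hcomm : ∀ l, Function.update ξ i s l • B l
          = Function.update (fun l => ξ l • B l) i (s • B i) l := fun l => by
        rcases eq_or_ne l i with rfl | hl <;> simp [*]
      rw [sum_congr rfl fun l _ => hcomm l, sum_update_of_mem (mem_univ i),
        sdiff_singleton_eq_erase]
      show _ = ∑ l, ξ l • B l + _
      rw [← add_sum_erase _ _ (mem_univ i), sub_smul]
      abel
    rw [← hupdate, det_sum_smul_eq_sum_indexA]
    refine sum_congr rfl fun σ _ => ?_
    rw [← mul_prod_erase _ _ (mem_univ i), Function.update_self, mul_assoc,
      prod_congr rfl fun l hl => by rw [Function.update_of_ne (ne_of_mem_erase hl)]]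
  have hjacobi : HasDerivAt (fun s => (Q + (s - ξ i) • B i).det) (Q.det * (Q⁻¹ * B i).trace)
      (ξ i) :=
    .comp_sub_const (ξ i) (ξ i) (by rw [sub_self]; exact hasDerivAt_det_add_smul hQ (B i))
  have hpoly : HasDerivAt (fun s => ∑ σ ∈ indexA d m, s ^ (σ i).card * r σ)
      (∑ σ ∈ indexA d m, (σ i).card * ξ i ^ ((σ i).card - 1) * r σ) (ξ i) :=
    HasDerivAt.fun_sum fun σ _ => (hasDerivAt_pow _ _).mul_const _
  simp only [hline] at hjacobi
  rw [hjacobi.unique hpoly, mul_sum]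
  refine sum_congr rfl fun σ _ => ?_
  rw [← mul_prod_erase _ (fun l => ξ l ^ (σ l).card) (mem_univ i)]
  rcases eq_or_ne (σ i).card 0 with h | h
  · simp [h]
  · rw [← mul_pow_sub_one h (ξ i)]
    ring

theorem mul_trace_inv_mul_eq_of_inVariety {F : ∀ i : Fin n, Matrix (Fin d) (Fin (m i)) ℝ}
    (hF : IsMatrixFrame F) {c ξ : Fin n → ℝ} (h : inVariety F c ξ) (i : Fin n) :
    ξ i * ((∑ l, ξ l • (F l * (F l)ᵀ))⁻¹ * (F i * (F i)ᵀ)).trace = c i := by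
  obtain ⟨hξ, hvar⟩ := h
  have hdet := (posDef_sum_smul_mul_transpose hF hξ).det_pos
  have hi := hvar i
  rw [sum_card_mul_prod_pow_mul_Delta F (isUnit_iff_ne_zero.2 hdet.ne'),
    ← det_sum_smul_eq_sum_indexA] at hi
  refine mul_right_cancel₀ hdet.ne' ?_
  linear_combination hi

theorem transformsToRIF_iff {F : ∀ i : Fin n, Matrix (Fin d) (Fin (m i)) ℝ}
    {c ξ : Fin n → ℝ} {A : Matrix (Fin d) (Fin d) ℝ} (hA : Aᵀ = A)
    (hfrob : ∀ i, ξ i * frobSq (A * F i) = c i) (hc : ∀ i, c i ≠ 0) :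
    TransformsToRIF F c A ↔ A * (∑ l, ξ l • (F l * (F l)ᵀ)) * A = 1 := by
  have hcoef : ∀ i, c i / frobSq (A * F i) = ξ i := fun i => by
    have hfrob_ne : frobSq (A * F i) ≠ 0 := fun h0 => hc i (by rw [← hfrob i, h0, mul_zero])
    rw [← hfrob i, mul_div_cancel_right₀ _ hfrob_ne]
  rw [TransformsToRIF, Matrix.mul_sum, Matrix.sum_mul]
  simp only [hcoef, transpose_mul, hA, Matrix.mul_smul, Matrix.smul_mul, Matrix.mul_assoc]

end Frame

theorem variety_gives_RIF_general {d n : ℕ} {m : Fin n → ℕ}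
    (F : ∀ i : Fin n, Matrix (Fin d) (Fin (m i)) ℝ) (hF : IsMatrixFrame F)
    (c : Fin n → ℚ) (hc : ∀ i, 0 < c i)
    (tstar : Fin n → ℝ)
    (hmem : inVariety F (fun i => (c i : ℝ)) (fun i => Real.exp (tstar i)))
    (hQ : (∑ i, Real.exp (tstar i) • (F i * (F i)ᵀ)).PosSemidef) :
    (∀ i, hQ.sqrt⁻¹ * F i ≠ 0) ∧
      TransformsToRIF F (fun i => (c i : ℝ)) hQ.sqrt⁻¹ := by
  set S := hQ.sqrt
  have hSS : S * S = ∑ i, Real.exp (tstar i) • (F i * (F i)ᵀ) := hQ.sqrt_mul_self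
  have hST : Sᵀ = S := (conjTranspose_eq_transpose_of_trivial S).symm.trans hQ.isHermitian_sqrt
  have hS : IsUnit S.det := by
    have hdet := (posDef_sum_smul_mul_transpose hF fun i => Real.exp_pos (tstar i)).det_pos
    rw [← hSS, det_mul] at hdet
    exact isUnit_iff_ne_zero.2 (left_ne_zero_of_mul hdet.ne')
  have hc' : ∀ i, (c i : ℝ) ≠ 0 := fun i => by exact_mod_cast (hc i).ne'
  have hfrob : ∀ i, Real.exp (tstar i) * frobSq (S⁻¹ * F i) = c i := fun i => by
    rw [← trace_inv_mul_self_mul_eq_frobSq hST, hSS]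
    exact mul_trace_inv_mul_eq_of_inVariety hF hmem i
  refine ⟨fun i h0 => hc' i ?_, ?_⟩
  · simpa [h0, frobSq] using (hfrob i).symm
  · rw [transformsToRIF_iff (by rw [transpose_nonsing_inv, hST]) hfrob hc', ← hSS,
      Matrix.mul_assoc, Matrix.mul_assoc, mul_nonsing_inv S hS, Matrix.mul_one,
      nonsing_inv_mul S hS]

/-- **Theorem (Constructive aspects of RIFs), final claim.**  If
`(e^{t*₁}, …, e^{t*ₙ}) ∈ 𝕍(F, c)` then `Q(t*)^{-1/2}` (the inverse of the positive
semidefinite square root of `Q(t*) = ∑ e^{t*ᵢ} Xᵢ Xᵢᵀ`) transforms `(F, c)` into a radial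
isotropic frame. -/
theorem variety_gives_RIF {d n : ℕ} {m : Fin n → ℕ}
    (F : ∀ i : Fin n, Matrix (Fin d) (Fin (m i)) ℝ) (hF : IsMatrixFrame F)
    (c : Fin n → ℚ) (hc : ∀ i, 0 < c i) (hsum : ∑ i, (c i : ℝ) = d)
    (tstar : Fin n → ℝ)
    (hmem : inVariety F (fun i => (c i : ℝ)) (fun i => Real.exp (tstar i)))
    (hQ : (∑ i, Real.exp (tstar i) • (F i * (F i)ᵀ)).PosSemidef) :
    (∀ i, hQ.sqrt⁻¹ * F i ≠ 0) ∧
      TransformsToRIF F (fun i => (c i : ℝ)) hQ.sqrt⁻¹ :=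
  variety_gives_RIF_general F hF c hc tstar hmem hQ

end MFrames
end

section
/- (Description of the orbit polytope of a tuple of matrices.) Let X_1, …, X_n be real matrices with X_i ∈ ℝ^{d×d_i} and let c = (c_1,…,c_n) ∈ ℝ^n_{≥0} with ∑_{i=1}^n c_i = d. Then the following are equivalent: (a) for every linear subspace T ⊆ ℝ^d and every subset J ⊆ {1,…,n} such that Col(X_i) ⊆ T^⊥ for all i ∉ J, one has dim T ≤ ∑_{i∈J} c_i; (b) for every subset I ⊆ {1,…,n}, ∑_{i∈I} c_i ≤ dim(∑_{i∈I} Col(X_i)). (Condition (a) is membership of c in the orbit polytope K_{V_F} of the quiver representation V_F attached to the tuple, and (b) is membership in K_F; the lemma asserts K_{V_F} = K_F.) -/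
open scoped BigOperators
open Matrix

/-!
The hypothesis `Col(Xᵢ) ⊆ T^⊥` for all `i ∉ J` says exactly that `T ⊆ U^⊥`, where
`U = ∑_{i ∉ J} Col(Xᵢ)`. So for fixed `J` the sharpest instance of (a) is `T = U^⊥`, of
dimension `d - dim U`; as `∑ cᵢ = d`, the inequality `dim U^⊥ ≤ ∑_{i ∈ J} cᵢ` is
`∑_{i ∉ J} cᵢ ≤ dim U`, which is (b) for `I = Jᶜ`.
-/

namespace MFrames

open Module

section OrthogonalBound

variable {ι E : Type*} [Fintype ι] [DecidableEq ι] [NormedAddCommGroup E]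
  [InnerProductSpace ℝ E] [FiniteDimensional ℝ E] (V : ι → Submodule ℝ E)

lemma forall_notMem_le_orthogonal_iff (T : Submodule ℝ E) (J : Finset ι) :
    (∀ i ∉ J, V i ≤ Tᗮ) ↔ T ≤ (⨆ i ∈ Jᶜ, V i)ᗮ := by
  rw [Submodule.le_orthogonal_iff_le_orthogonal, iSup₂_le_iff]
  simp only [Finset.mem_compl]

lemma finrank_orthogonal_iSup_le_iff (c : ι → ℝ) (hc : ∑ i, c i = finrank ℝ E)
    (J : Finset ι) :
    (finrank ℝ ↥(⨆ i ∈ Jᶜ, V i)ᗮ : ℝ) ≤ ∑ i ∈ J, c i ↔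
      ∑ i ∈ Jᶜ, c i ≤ finrank ℝ ↥(⨆ i ∈ Jᶜ, V i) := by
  have hdim := Submodule.finrank_add_finrank_orthogonal (⨆ i ∈ Jᶜ, V i)
  have hsum := Finset.sum_compl_add_sum J c
  rw [hc] at hsum
  constructor <;> intro h <;> push_cast [← hdim] at hsum ⊢ <;> linarith

theorem forall_finrank_le_sum_iff_forall_sum_le_finrank (c : ι → ℝ)
    (hc : ∑ i, c i = finrank ℝ E) :
    (∀ T : Submodule ℝ E, ∀ J : Finset ι,
        (∀ i ∉ J, V i ≤ Tᗮ) → (finrank ℝ T : ℝ) ≤ ∑ i ∈ J, c i) ↔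
      ∀ I : Finset ι, ∑ i ∈ I, c i ≤ (finrank ℝ ↥(⨆ i ∈ I, V i) : ℝ) := by
  constructor
  · intro h I
    have := (finrank_orthogonal_iSup_le_iff V c hc Iᶜ).mp
      (h _ Iᶜ ((forall_notMem_le_orthogonal_iff V _ _).mpr le_rfl))
    rwa [compl_compl] at this
  · intro h T J hTJ
    calc (finrank ℝ T : ℝ)
        ≤ finrank ℝ ↥(⨆ i ∈ Jᶜ, V i)ᗮ := by
          exact_mod_cast
            Submodule.finrank_mono ((forall_notMem_le_orthogonal_iff V T J).mp hTJ)
      _ ≤ ∑ i ∈ J, c i := (finrank_orthogonal_iSup_le_iff V c hc J).mpr (h Jᶜ)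

end OrthogonalBound

lemma finrank_biSup_map_linearEquiv {R M N ι : Type*} [Semiring R] [AddCommMonoid M]
    [Module R M] [AddCommMonoid N] [Module R N] (e : M ≃ₗ[R] N) (V : ι → Submodule R M)
    (I : Finset ι) :
    finrank R ↥(⨆ i ∈ I, (V i).map e.toLinearMap) = finrank R ↥(⨆ i ∈ I, V i) := by
  have h : (⨆ i ∈ I, V i).map e.toLinearMap = ⨆ i ∈ I, (V i).map e.toLinearMap := by
    simp only [Submodule.map_iSup]
  rw [← h, LinearEquiv.finrank_map_eq]

/-- `colsPerp` is orthogonality for the dot product on `Fin d → ℝ`, which carries no inner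
product structure; this transports it to `EuclideanSpace`, where `ᗮ` is available. -/
noncomputable abbrev toEuclidean (d : ℕ) : (Fin d → ℝ) ≃ₗ[ℝ] EuclideanSpace ℝ (Fin d) :=
  (EuclideanSpace.equiv (Fin d) ℝ).symm.toLinearEquiv

lemma inner_toEuclidean {d : ℕ} (x y : Fin d → ℝ) :
    inner ℝ (toEuclidean d x) (toEuclidean d y) = x ⬝ᵥ y := by
  simp [EuclideanSpace.inner_eq_star_dotProduct, dotProduct_comm]

lemma colSpan_le_iff {d k : ℕ} (X : Matrix (Fin d) (Fin k) ℝ) (U : Submodule ℝ (Fin d → ℝ)) :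
    colSpan X ≤ U ↔ ∀ j, Xᵀ j ∈ U :=
  Submodule.span_le.trans Set.range_subset_iff

lemma colsPerp_iff_map_le_orthogonal {d k : ℕ} (X : Matrix (Fin d) (Fin k) ℝ)
    (T : Submodule ℝ (Fin d → ℝ)) :
    colsPerp X T ↔
      (colSpan X).map (toEuclidean d).toLinearMap ≤ (T.map (toEuclidean d).toLinearMap)ᗮ := by
  rw [Submodule.map_le_iff_le_comap, colSpan_le_iff]
  simp only [Submodule.mem_comap, Submodule.mem_orthogonal, Submodule.mem_map,
    LinearEquiv.coe_coe, forall_exists_index, and_imp, forall_apply_eq_imp_iff₂,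
    inner_toEuclidean, colsPerp, funext_iff, mulVec, Pi.zero_apply]
  exact ⟨fun h j x hx => (dotProduct_comm _ _).trans (h x hx j),
    fun h x hx j => (dotProduct_comm _ _).trans (h j x hx)⟩

theorem orbit_polytope_description_general {d n : ℕ} {m : Fin n → ℕ}
    (F : ∀ i : Fin n, Matrix (Fin d) (Fin (m i)) ℝ)
    (c : Fin n → ℝ) (hcsum : ∑ i, c i = d) :
    (∀ T : Submodule ℝ (Fin d → ℝ), ∀ J : Finset (Fin n),
        (∀ i ∉ J, colsPerp (F i) T) → (Module.finrank ℝ T : ℝ) ≤ ∑ i ∈ J, c i) ↔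
      (∀ I : Finset (Fin n),
        ∑ i ∈ I, c i ≤ (Module.finrank ℝ ↥(⨆ i ∈ I, colSpan (F i)) : ℝ)) := by
  let e := toEuclidean d
  let V i := (colSpan (F i)).map e.toLinearMap
  simp only [← finrank_biSup_map_linearEquiv e, colsPerp_iff_map_le_orthogonal]
  rw [← forall_finrank_le_sum_iff_forall_sum_le_finrank V c (by simpa using hcsum)]
  refine (Submodule.orderIsoMapComap e).toEquiv.forall_congr fun T => ?_
  rw [RelIso.coe_fn_toEquiv, Submodule.orderIsoMapComap_apply, LinearEquiv.finrank_map_eq]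

/-- **Description of the orbit polytope of a tuple of matrices (`K_{V_F} = K_F`).**
For `c ≥ 0` with `∑ cᵢ = d`, condition (a): `dim T ≤ ∑_{i∈J} cᵢ` for every pair `(T, J)`
with `Col(Xᵢ) ⊆ T^⊥` for all `i ∉ J` (a subrepresentation of `V_F`), is equivalent to
condition (b): `∑_{i∈I} cᵢ ≤ dim (∑_{i∈I} Col(Xᵢ))` for every `I ⊆ [n]`. -/
theorem orbit_polytope_description {d n : ℕ} {m : Fin n → ℕ}
    (F : ∀ i : Fin n, Matrix (Fin d) (Fin (m i)) ℝ)
    (c : Fin n → ℝ) (hc0 : ∀ i, 0 ≤ c i) (hcsum : ∑ i, c i = d) :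
    (∀ T : Submodule ℝ (Fin d → ℝ), ∀ J : Finset (Fin n),
        (∀ i ∉ J, colsPerp (F i) T) → (Module.finrank ℝ T : ℝ) ≤ ∑ i ∈ J, c i) ↔
      (∀ I : Finset (Fin n),
        ∑ i ∈ I, c i ≤ (Module.finrank ℝ ↥(⨆ i ∈ I, colSpan (F i)) : ℝ)) :=
  orbit_polytope_description_general F c hcsum

end MFrames
end

section
/- Let X_1, …, X_n be real matrices with X_i ∈ ℝ^{d×d_i} and let c = (c_1,…,c_n) ∈ ℚ^n_{>0}. If (F, c) is a weighted Parseval matrix frame, i.e. ∑_{i=1}^n c_i·X_i·X_iᵀ = I_d and ‖X_i‖_F² = 1 for all i, then c ∈ K_F, i.e. (F, c) is a semi-stable matrix frame. -/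
open scoped BigOperators
open Matrix

/-!
Fix `I` and put `A = ∑_{i ∈ I} cᵢ XᵢXᵢᵀ`. Its trace is `∑_{i ∈ I} cᵢ` because each `XᵢXᵢᵀ` has
trace `‖Xᵢ‖_F² = 1`, and `0 ≤ A ≤ 1` because the remaining summands of the Parseval identity are
positive semidefinite. So every eigenvalue of `A` lies in `[0, 1]`, whence
`tr A ≤ rank A = dim Col(A) ≤ dim ∑_{i ∈ I} Col(Xᵢ)`.
-/

open scoped MatrixOrder

namespace MFrames

theorem trace_le_rank_of_posSemidef_of_le_one {ι : Type*} [Fintype ι] [DecidableEq ι]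
    {A : Matrix ι ι ℝ} (hA : A.PosSemidef) (h1A : A ≤ 1) :
    A.trace ≤ A.rank := by
  have hle : ∀ i, hA.1.eigenvalues i ≤ if hA.1.eigenvalues i ≠ 0 then 1 else 0 := by
    intro i
    split_ifs with h
    · exact (CFC.le_one_iff A hA.1).mp h1A _ (hA.1.eigenvalues_mem_spectrum_real i)
    · exact (not_not.mp h).le
  rw [hA.1.trace_eq_sum_eigenvalues, hA.1.rank_eq_card_non_zero_eigs, Fintype.card_subtype,
    Finset.card_filter, Nat.cast_sum]
  exact Finset.sum_le_sum fun i _ => by simpa [apply_ite] using hle i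

section ColSpan

variable {d : ℕ}

theorem colSpan_eq_range_mulVecLin {k : ℕ} (X : Matrix (Fin d) (Fin k) ℝ) :
    colSpan X = LinearMap.range X.mulVecLin :=
  (range_mulVecLin X).symm

theorem rank_eq_finrank_colSpan (A : Matrix (Fin d) (Fin d) ℝ) :
    A.rank = Module.finrank ℝ (colSpan A) := by
  rw [colSpan_eq_range_mulVecLin]
  rfl

theorem colSpan_sum_smul_mul_transpose_le {ι : Type*} {k : ι → ℕ}
    (X : ∀ i, Matrix (Fin d) (Fin (k i)) ℝ) (a : ι → ℝ) (s : Finset ι) :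
    colSpan (∑ i ∈ s, a i • (X i * (X i)ᵀ)) ≤ ⨆ i ∈ s, colSpan (X i) := by
  rw [colSpan_eq_range_mulVecLin]
  rintro _ ⟨v, rfl⟩
  simp only [mulVecLin_apply, sum_mulVec, smul_mulVec, ← mulVec_mulVec]
  refine Submodule.sum_mem _ fun i hi => Submodule.smul_mem _ _ ?_
  refine le_iSup₂ (f := fun i _ => colSpan (X i)) i hi ?_
  rw [colSpan_eq_range_mulVecLin]
  exact LinearMap.mem_range_self _ _

end ColSpan

theorem trace_mul_transpose_eq_frobSq {α β : Type*} [Fintype α] [Fintype β]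
    (X : Matrix α β ℝ) : (X * Xᵀ).trace = frobSq X := by
  simp [Matrix.trace, Matrix.mul_apply, frobSq, sq]

theorem posSemidef_smul_mul_transpose {α β : Type*} [Fintype α] [Fintype β]
    (X : Matrix α β ℝ) {a : ℝ} (ha : 0 ≤ a) : (a • (X * Xᵀ)).PosSemidef := by
  simpa using (posSemidef_self_mul_conjTranspose X).smul ha

/-- **Corollary (2).**  If `(F, c)` is a weighted Parseval matrix frame
(`∑ cᵢ Xᵢ Xᵢᵀ = I_d` and `‖Xᵢ‖_F² = 1` for all `i`), then `c ∈ K_F`, i.e. `(F, c)` is a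
semi-stable matrix frame. -/
theorem parseval_is_semistable {d n : ℕ} {m : Fin n → ℕ}
    (F : ∀ i : Fin n, Matrix (Fin d) (Fin (m i)) ℝ)
    (c : Fin n → ℚ) (hc : ∀ i, 0 < c i)
    (hP : ∑ i, (c i : ℝ) • (F i * (F i)ᵀ) = (1 : Matrix (Fin d) (Fin d) ℝ))
    (hnorm : ∀ i, frobSq (F i) = 1) :
    (fun i => (c i : ℝ)) ∈ orbitPolytope F := by
  have hpsd : ∀ i, ((c i : ℝ) • (F i * (F i)ᵀ)).PosSemidef := fun i =>
    posSemidef_smul_mul_transpose (F i) (by exact_mod_cast (hc i).le)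
  have htr : ∀ i, ((c i : ℝ) • (F i * (F i)ᵀ)).trace = c i := fun i => by
    rw [trace_smul, trace_mul_transpose_eq_frobSq, hnorm i, smul_eq_mul, mul_one]
  refine ⟨fun i => Rat.cast_nonneg.mpr (hc i).le, ?_, fun I => ?_⟩
  · simpa [trace_sum, htr] using congrArg trace hP
  set A := ∑ i ∈ I, (c i : ℝ) • (F i * (F i)ᵀ)
  have hA : A.PosSemidef := posSemidef_sum I fun i _ => hpsd i
  have h1A : A ≤ 1 := by
    rw [Matrix.le_iff, ← hP, ← Finset.sum_compl_add_sum I, add_sub_cancel_right]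
    exact posSemidef_sum Iᶜ fun i _ => hpsd i
  calc ∑ i ∈ I, (c i : ℝ) = A.trace := by simp only [A, trace_sum, htr]
    _ ≤ A.rank := trace_le_rank_of_posSemidef_of_le_one hA h1A
    _ = Module.finrank ℝ (colSpan A) := by rw [rank_eq_finrank_colSpan]
    _ ≤ Module.finrank ℝ ↥(⨆ i ∈ I, colSpan (F i)) := by
      exact_mod_cast Submodule.finrank_mono (colSpan_sum_smul_mul_transpose_le F _ I)

end MFrames
end

section
/- (Perturbation lemma.) Let ε < 0.3 and let F = (X_1, …, X_n) with X_i ∈ ℝ^{d×d_i} and n > d be an ε-nearly equal-norm Parseval matrix frame. Then there exists a tuple G = (Y_1, …, Y_n) with Y_i ∈ ℝ^{d×d_i} such that: (1) G is generic; (2) dist²(F, G) ≤ d·ε; and (3) G is a 4ε-nearly equal-norm Parseval matrix frame. -/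
open scoped BigOperators
open Matrix

/-! Move `F` along a line `t ↦ F + t • W` whose direction `W` is generic: its columns are distinct
points `(1, x, …, x^(d-1))` of the moment curve, so any `d` of them form an invertible Vandermonde
matrix. For each choice of `d` columns, the determinant of those columns of `F + t • W` is a
polynomial in `t` whose top coefficient is that Vandermonde determinant, so `F + t • W` is generic
for all but finitely many `t`. Being a `4ε`-nearly equal-norm Parseval frame is an open condition
around an `ε`-nearly one, because the slack `3ε • 1` absorbs every small symmetric perturbation of
the frame operator, and `dist² (F, F + t • W) → 0`; hence some small `t ≠ 0` does everything. -/

open Filter Topology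

open Polynomial in
theorem Matrix.finite_setOf_det_add_smul_eq_zero {K ι : Type*} [Field K] [Fintype ι]
    [DecidableEq ι] (P Q : Matrix ι ι K) (hQ : Q.det ≠ 0) :
    {t : K | (P + t • Q).det = 0}.Finite := by
  set p : K[X] := det ((X : K[X]) • Q.map C + P.map C)
  have hp : p ≠ 0 := fun h => hQ <| by
    rw [← coeff_det_X_add_C_card Q P]; simp [p, h]
  refine (finite_setOfPred_isRoot hp).subset fun t ht => ?_
  rw [Set.mem_ofPred_eq, IsRoot, ← coe_evalRingHom, RingHom.map_det, ← ht]
  congr 1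
  ext r s
  simp only [RingHom.mapMatrix_apply, map_apply, add_apply, smul_apply, coe_evalRingHom,
    eval_add, smul_eq_mul, eval_mul, eval_X, eval_C]
  ring

theorem finite_setOf_not_linearIndependent_add_smul {K ι κ : Type*} [Field K] [Fintype ι]
    [Fintype κ] [DecidableEq κ] (hcard : Fintype.card ι = Fintype.card κ)
    (v w : ι → κ → K) (hw : LinearIndependent K w) :
    {t : K | ¬ LinearIndependent K (v + t • w)}.Finite := by
  let e : κ ≃ ι := Fintype.equivOfCardEq hcard.symm
  have key : ∀ u : ι → κ → K, LinearIndependent K u ↔ (Matrix.of (u ∘ e)).det ≠ 0 := fun u => by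
    rw [← linearIndependent_equiv e, ← isUnit_iff_ne_zero, ← Matrix.isUnit_iff_isUnit_det,
      ← Matrix.linearIndependent_rows_iff_isUnit]
    rfl
  refine (Matrix.finite_setOf_det_add_smul_eq_zero (.of (v ∘ e)) (.of (w ∘ e))
    ((key w).1 hw)).subset fun t ht => ?_
  rw [Set.mem_ofPred_eq, key, not_not] at ht
  exact ht

theorem Matrix.posSemidef_smul_one_add_of_sum_abs_le {ι : Type*} [Fintype ι] [DecidableEq ι]
    {E : Matrix ι ι ℝ} {c : ℝ} (hE : E.IsHermitian) (hc : ∑ r, ∑ s, |E r s| ≤ c) :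
    (c • 1 + E).PosSemidef := by
  have hsymm : (c • (1 : Matrix ι ι ℝ) + E).IsHermitian :=
    (isHermitian_one.smul (.all c)).add hE
  refine .of_dotProduct_mulVec_nonneg hsymm fun x => ?_
  have hsq : ∀ r, x r ^ 2 ≤ x ⬝ᵥ x := fun r => by
    simpa [sq, dotProduct] using
      Finset.single_le_sum (f := fun i => x i * x i) (fun i _ => mul_self_nonneg _)
        (Finset.mem_univ r)
  have hprod : ∀ r s, |x r * x s| ≤ x ⬝ᵥ x := fun r s => by
    have := two_mul_le_add_sq |x r| |x s|
    rw [abs_mul]; nlinarith [sq_abs (x r), sq_abs (x s), hsq r, hsq s]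
  have hquad : -((∑ r, ∑ s, |E r s|) * (x ⬝ᵥ x)) ≤ x ⬝ᵥ (E *ᵥ x) := by
    refine neg_le_of_abs_le ?_
    calc |x ⬝ᵥ (E *ᵥ x)| = |∑ r, ∑ s, E r s * (x r * x s)| := by
          simp only [dotProduct, mulVec, Finset.mul_sum]; congr! 3; ring
      _ ≤ ∑ r, ∑ s, |E r s| * |x r * x s| := by
          refine (Finset.abs_sum_le_sum_abs _ _).trans (Finset.sum_le_sum fun r _ => ?_)
          simpa only [abs_mul] using
            Finset.abs_sum_le_sum_abs (fun s => E r s * (x r * x s)) Finset.univ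
      _ ≤ ∑ r, ∑ s, |E r s| * (x ⬝ᵥ x) := by gcongr with r _ s _; exact hprod r s
      _ = (∑ r, ∑ s, |E r s|) * (x ⬝ᵥ x) := by simp only [Finset.sum_mul]
  have hxx : 0 ≤ x ⬝ᵥ x := Finset.sum_nonneg fun i _ => mul_self_nonneg (x i)
  simp only [star_trivial, add_mulVec, smul_mulVec, one_mulVec, dotProduct_add, dotProduct_smul,
    smul_eq_mul]
  nlinarith

theorem Matrix.eventually_posSemidef_smul_one_add {ι : Type*} [Fintype ι] [DecidableEq ι]
    {c : ℝ} (hc : 0 < c) :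
    ∀ᶠ E in 𝓝 (0 : Matrix ι ι ℝ), E.IsHermitian → (c • 1 + E).PosSemidef := by
  have hcont : Continuous fun E : Matrix ι ι ℝ => ∑ r, ∑ s, |E r s| := by fun_prop
  filter_upwards [hcont.tendsto' 0 0 (by simp) |>.eventually (eventually_le_nhds hc)]
    with E hE hsymm using posSemidef_smul_one_add_of_sum_abs_le hsymm hE

namespace MFrames

@[fun_prop]
theorem continuous_frobSq {α β : Type*} [Fintype α] [Fintype β] :
    Continuous (frobSq : Matrix α β ℝ → ℝ) := by
  unfold frobSq; fun_prop

variable {d n : ℕ} {m : Fin n → ℕ}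

theorem continuous_frameOp :
    Continuous (frameOp : (∀ i : Fin n, Matrix (Fin d) (Fin (m i)) ℝ) → _) := by
  unfold frameOp; fun_prop

theorem isHermitian_frameOp (F : ∀ i : Fin n, Matrix (Fin d) (Fin (m i)) ℝ) :
    (frameOp F).IsHermitian := by
  simp [IsHermitian, frameOp, conjTranspose_eq_transpose_of_trivial, transpose_sum]

theorem NearlyENParseval.eventually_nhds {ε δ : ℝ}
    {F : ∀ i : Fin n, Matrix (Fin d) (Fin (m i)) ℝ} (hF : NearlyENParseval ε F) (hεδ : ε < δ)
    (hd : 0 < d) :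
    ∀ᶠ G in 𝓝 F, NearlyENParseval δ G := by
  obtain ⟨hlow, hup, hnorm⟩ := hF
  have hop := continuous_frameOp.tendsto F
  have hsmall := eventually_posSemidef_smul_one_add (ι := Fin d) (sub_pos.2 hεδ)
  have hlow' := (tendsto_sub_nhds_zero_iff.2 hop).eventually hsmall
  have hup' := (sub_self (frameOp F) ▸ tendsto_const_nhds.sub hop).eventually hsmall
  have hnorm' : ∀ᶠ G in 𝓝 F, ∀ i, frobSq (G i) ∈
      Set.Ioo ((1 - δ) * ((d : ℝ) / n)) ((1 + δ) * ((d : ℝ) / n)) := by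
    refine eventually_all.2 fun i => ?_
    have hdn : (0 : ℝ) < d / n := by
      have : 0 < n := i.pos
      positivity
    have hcont : Continuous fun G : ∀ i, Matrix (Fin d) (Fin (m i)) ℝ => frobSq (G i) := by
      fun_prop
    refine (hcont.tendsto F).eventually (Ioo_mem_nhds ?_ ?_) <;> nlinarith [hnorm i]
  filter_upwards [hlow', hup', hnorm'] with G hGlow hGup hGnorm
  refine ⟨?_, ?_, fun i => ⟨(hGnorm i).1.le, (hGnorm i).2.le⟩⟩
  · convert hlow.add (hGlow ((isHermitian_frameOp G).sub (isHermitian_frameOp F))) using 1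
    module
  · convert hup.add (hGup ((isHermitian_frameOp F).sub (isHermitian_frameOp G))) using 1
    module

theorem eventually_dist2_lt (F : ∀ i : Fin n, Matrix (Fin d) (Fin (m i)) ℝ) {r : ℝ}
    (hr : 0 < r) : ∀ᶠ G in 𝓝 F, dist2 F G < r := by
  have hcont : Continuous (dist2 F) := by
    unfold dist2; fun_prop
  exact hcont.tendsto' F 0 (by simp [dist2, frobSq]) |>.eventually (eventually_lt_nhds hr)

theorem exists_generic (hdn : d < n) :
    ∃ W : ∀ i : Fin n, Matrix (Fin d) (Fin (m i)) ℝ, Generic W := by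
  let x : ((i : Fin n) × Fin (m i)) → ℝ := fun p => (Fintype.equivFin _ p : ℕ)
  have hx : Function.Injective x :=
    Nat.cast_injective.comp (Fin.val_injective.comp (Fintype.equivFin _).injective)
  refine ⟨fun i => .of fun r k => x ⟨i, k⟩ ^ (r : ℕ), hdn, fun S hS => ?_⟩
  let e : Fin d ≃ S := (S.equivFinOfCardEq hS).symm
  rw [← linearIndependent_equiv e]
  change LinearIndependent ℝ (vandermonde fun j => x (e j)).row
  rw [linearIndependent_rows_iff_isUnit, isUnit_iff_isUnit_det, isUnit_iff_ne_zero,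
    det_vandermonde_ne_zero_iff]
  exact hx.comp (Subtype.val_injective.comp e.injective)

theorem Generic.eventually_cofinite_add_smul {F W : ∀ i : Fin n, Matrix (Fin d) (Fin (m i)) ℝ}
    (hW : Generic W) : ∀ᶠ t : ℝ in cofinite, Generic (fun i => F i + t • W i) := by
  have hS : ∀ S : Finset ((i : Fin n) × Fin (m i)), ∀ᶠ t : ℝ in cofinite, S.card = d →
      LinearIndependent ℝ (fun p : S => col (fun i => F i + t • W i) p) := fun S => by
    by_cases hcard : S.card = d
    · filter_upwards [(finite_setOf_not_linearIndependent_add_smul (by simpa using hcard)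
        (fun p : S => col F p) _ (hW.2 S hcard)).eventually_cofinite_notMem] with t ht
      exact fun _ => not_not.1 ht
    · exact .of_forall fun _ h => absurd h hcard
  filter_upwards [eventually_all.2 hS] with t ht using ⟨hW.1, ht⟩

theorem perturbation_lemma_general {d n : ℕ} (hd : 0 < d) (hdn : d < n) {m : Fin n → ℕ}
    {ε : ℝ} (hε0 : 0 < ε)
    (F : ∀ i : Fin n, Matrix (Fin d) (Fin (m i)) ℝ)
    (hF : NearlyENParseval ε F) :
    ∃ G : ∀ i : Fin n, Matrix (Fin d) (Fin (m i)) ℝ,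
      Generic G ∧ dist2 F G ≤ (d : ℝ) * ε ∧ NearlyENParseval (4 * ε) G := by
  obtain ⟨W, hW⟩ := exists_generic (m := m) hdn
  have hline : Tendsto (fun t : ℝ => fun i => F i + t • W i) (𝓝[≠] 0) (𝓝 F) :=
    tendsto_nhdsWithin_of_tendsto_nhds <| Continuous.tendsto' (by fun_prop) 0 F (by simp)
  have hgen : ∀ᶠ t : ℝ in 𝓝[≠] 0, Generic fun i => F i + t • W i :=
    nhdsNE_le_cofinite (0 : ℝ) (hW.eventually_cofinite_add_smul (F := F))
  have hdist := hline.eventually (eventually_dist2_lt F (r := d * ε) (by positivity))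
  have hframe := hline.eventually (hF.eventually_nhds (δ := 4 * ε) (by linarith) hd)
  obtain ⟨t, ht⟩ := (hgen.and (hdist.and hframe)).exists
  exact ⟨_, ht.1, ht.2.1.le, ht.2.2⟩

/-- **Perturbation lemma.**  Every `ε`-nearly equal-norm Parseval matrix frame (`ε < 0.3`,
`n > d`) can be perturbed to a tuple `G` such that `G` is generic, `dist²(F, G) ≤ d ε`, and
`G` is a `4ε`-nearly equal-norm Parseval matrix frame. -/
theorem perturbation_lemma {d n : ℕ} (hd : 0 < d) (hdn : d < n) {m : Fin n → ℕ}
    {ε : ℝ} (hε0 : 0 < ε) (hε : ε < 0.3)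
    (F : ∀ i : Fin n, Matrix (Fin d) (Fin (m i)) ℝ)
    (hF : NearlyENParseval ε F) :
    ∃ G : ∀ i : Fin n, Matrix (Fin d) (Fin (m i)) ℝ,
      Generic G ∧ dist2 F G ≤ (d : ℝ) * ε ∧ NearlyENParseval (4 * ε) G :=
  perturbation_lemma_general hd hdn hε0 F hF

end MFrames
end

section
/- Let ε < 0.3 and let G = (Y_1, …, Y_n) with Y_i ∈ ℝ^{d×d_i} be a 4ε-nearly equal-norm Parseval matrix frame. Assume there is a diagonal matrix M ∈ ℝ^{d×d} with positive weakly decreasing diagonal entries such that (M·Y_1, …, M·Y_n) is a radial isotropic frame for the weight c = (d/n, …, d/n), i.e. ∑_{i=1}^n (d/n)·(M·Y_i)(M·Y_i)ᵀ/‖M·Y_i‖_F² = I_d. Let Z = (√(d/n)·M·Y_1/‖M·Y_1‖_F, …, √(d/n)·M·Y_n/‖M·Y_n‖_F). If γ ≤ min{1, ε} satisfies (1−γ)·d/n ≤ ‖Y_i‖_F² ≤ (1+γ)·d/n for all i, then dist²(G, Z) ≤ 8εd² + 4γd². (Moreover Z is an equal-norm Parseval matrix frame.) -/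
open scoped BigOperators
open Matrix

/-!
Radial isotropy of `M Yᵢ` says exactly that `Zᵢ = sᵢ M Yᵢ`, `sᵢ = √(d/n) / ‖M Yᵢ‖_F`, is
equal-norm Parseval. Let `rᵢℓ` and `pᵢℓ` be the squared norms of the `ℓ`-th rows of `Yᵢ` and `Zᵢ`,
so `pᵢℓ = xᵢℓ² rᵢℓ` with `xᵢℓ = sᵢ λℓ` decreasing in `ℓ`. Since `(1 - x)² ≤ |1 - x²|` for `x ≥ 0`,
`dist²(G, Z) = ∑ rᵢℓ (1 - xᵢℓ)² ≤ ∑ |aᵢℓ|` with `a = p - r`. The columns of `a` sum to at most `4ε`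
(compare the diagonals of the frame operators of `Z` and `G`), its rows to at least `-γ d/n`, and
each row changes sign at most once, from `+` to `-`. Such a row satisfies
`aᵢℓ⁺ ≤ γ d/n + ∑_{ℓ' ≤ ℓ} aᵢℓ'`, so every column of `a⁺` sums to at most `4εd + γd`, and
`∑ |a| = 2 ∑ a⁺ - ∑ a ≤ 2d (4εd + γd) + γd`.
-/

namespace MFrames

theorem sq_one_sub_le_abs_one_sub_sq {x : ℝ} (hx : 0 ≤ x) : (1 - x) ^ 2 ≤ |1 - x ^ 2| := by
  have h : |1 - x| ≤ 1 + x := abs_le.2 ⟨by linarith, by linarith⟩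
  calc (1 - x) ^ 2 = |1 - x| * |1 - x| := by rw [← abs_mul, ← sq, abs_sq]
    _ ≤ |1 - x| * (1 + x) := mul_le_mul_of_nonneg_left h (abs_nonneg _)
    _ = |1 - x ^ 2| := by
        rw [show 1 - x ^ 2 = (1 - x) * (1 + x) by ring, abs_mul,
          abs_of_nonneg (by linarith : 0 ≤ 1 + x)]

def SingleCrossing {κ : Type*} [Preorder κ] (f : κ → ℝ) : Prop :=
  ∀ ⦃ℓ ℓ'⦄, ℓ ≤ ℓ' → 0 < f ℓ' → 0 ≤ f ℓ

theorem singleCrossing_sq_sub_one_mul {κ : Type*} [Preorder κ] {x r : κ → ℝ}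
    (hx0 : ∀ ℓ, 0 ≤ x ℓ) (hx : Antitone x) (hr : ∀ ℓ, 0 ≤ r ℓ) :
    SingleCrossing fun ℓ => (x ℓ ^ 2 - 1) * r ℓ := by
  intro ℓ ℓ' hle hpos
  have h1 : 1 < x ℓ' ^ 2 := by
    by_contra! h
    exact (mul_nonpos_of_nonpos_of_nonneg (by linarith) (hr ℓ')).not_gt hpos
  have : 1 ≤ x ℓ := by nlinarith [hx hle, hx0 ℓ']
  exact mul_nonneg (by nlinarith) (hr ℓ)

section SingleCrossing

variable {ι κ : Type*} [Fintype ι] [Fintype κ] [LinearOrder κ]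

theorem SingleCrossing.max_le_add_sum_le {f : κ → ℝ} (hf : SingleCrossing f) {β : ℝ}
    (hβ : 0 ≤ β) (hsum : -β ≤ ∑ ℓ, f ℓ) (ℓ : κ) :
    max (f ℓ) 0 ≤ β + ∑ ℓ' with ℓ' ≤ ℓ, f ℓ' := by
  by_cases hinit : ∀ ℓ' ≤ ℓ, 0 ≤ f ℓ'
  · rw [max_eq_left (hinit ℓ le_rfl)]
    have := Finset.single_le_sum (s := {ℓ' | ℓ' ≤ ℓ}) (f := f)
      (fun ℓ' h => hinit ℓ' (Finset.mem_filter.1 h).2)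
      (Finset.mem_filter.2 ⟨Finset.mem_univ ℓ, le_rfl⟩)
    linarith
  · obtain ⟨ℓ₀, hℓ₀, hneg⟩ : ∃ ℓ₀ ≤ ℓ, f ℓ₀ < 0 := by simpa using hinit
    have htail : ∀ ℓ', ℓ₀ ≤ ℓ' → f ℓ' ≤ 0 := fun ℓ' h =>
      not_lt.1 fun hpos => (hf h hpos).not_gt hneg
    rw [max_eq_right (htail ℓ hℓ₀)]
    have hsplit := Finset.sum_filter_add_sum_filter_not Finset.univ (· ≤ ℓ) f
    have : ∑ ℓ' with ¬ ℓ' ≤ ℓ, f ℓ' ≤ 0 := Finset.sum_nonpos fun ℓ' h =>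
      htail ℓ' (hℓ₀.trans (not_le.1 (Finset.mem_filter.1 h).2).le)
    linarith

theorem sum_sum_max_le_of_singleCrossing {a : ι → κ → ℝ} (ha : ∀ i, SingleCrossing (a i))
    {α β : ℝ} (hα : 0 ≤ α) (hβ : 0 ≤ β) (hcol : ∀ ℓ, ∑ i, a i ℓ ≤ α)
    (hrow : ∀ i, -β ≤ ∑ ℓ, a i ℓ) :
    ∑ i, ∑ ℓ, max (a i ℓ) 0 ≤
      Fintype.card κ * (Fintype.card κ * α + Fintype.card ι * β) := by
  have hcolumn : ∀ ℓ, ∑ i, max (a i ℓ) 0 ≤ Fintype.card κ * α + Fintype.card ι * β := by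
    intro ℓ
    calc ∑ i, max (a i ℓ) 0 ≤ ∑ i, (β + ∑ ℓ' with ℓ' ≤ ℓ, a i ℓ') :=
          Finset.sum_le_sum fun i _ => (ha i).max_le_add_sum_le hβ (hrow i) ℓ
      _ = Fintype.card ι * β + ∑ ℓ' with ℓ' ≤ ℓ, ∑ i, a i ℓ' := by
          rw [Finset.sum_add_distrib, Finset.sum_comm]; simp
      _ ≤ Fintype.card ι * β + ∑ ℓ' with ℓ' ≤ ℓ, α := by
          gcongr with ℓ' _; exact hcol ℓ'
      _ ≤ Fintype.card κ * α + Fintype.card ι * β := by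
          rw [Finset.sum_const, nsmul_eq_mul, add_comm]
          gcongr
          exact_mod_cast Finset.card_le_univ _
  calc ∑ i, ∑ ℓ, max (a i ℓ) 0 = ∑ ℓ, ∑ i, max (a i ℓ) 0 := Finset.sum_comm
    _ ≤ ∑ _ℓ : κ, (Fintype.card κ * α + Fintype.card ι * β) :=
        Finset.sum_le_sum fun ℓ _ => hcolumn ℓ
    _ = _ := by simp [mul_add]

theorem sum_sum_abs_le_of_singleCrossing {a : ι → κ → ℝ} (ha : ∀ i, SingleCrossing (a i))
    {α β : ℝ} (hα : 0 ≤ α) (hβ : 0 ≤ β) (hcol : ∀ ℓ, ∑ i, a i ℓ ≤ α)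
    (hrow : ∀ i, -β ≤ ∑ ℓ, a i ℓ) :
    ∑ i, ∑ ℓ, |a i ℓ| ≤
      2 * Fintype.card κ * (Fintype.card κ * α + Fintype.card ι * β) + Fintype.card ι * β := by
  have habs : ∀ i ℓ, |a i ℓ| = 2 * max (a i ℓ) 0 - a i ℓ := fun i ℓ => by
    rcases le_total 0 (a i ℓ) with h | h
    · rw [abs_of_nonneg h, max_eq_left h]; ring
    · rw [abs_of_nonpos h, max_eq_right h]; ring
  have hpos := sum_sum_max_le_of_singleCrossing ha hα hβ hcol hrow
  have htotal : -(Fintype.card ι * β) ≤ ∑ i, ∑ ℓ, a i ℓ := by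
    have := Finset.sum_le_sum fun i (_ : i ∈ Finset.univ) => hrow i
    simpa using this
  simp only [habs, Finset.sum_sub_distrib, ← Finset.mul_sum]
  linarith

end SingleCrossing

noncomputable def rowSq {α β : Type*} [Fintype β] (X : Matrix α β ℝ) (ℓ : α) : ℝ :=
  ∑ k, X ℓ k ^ 2

section RowSq

variable {α β : Type*} [Fintype β]

theorem rowSq_nonneg (X : Matrix α β ℝ) (ℓ : α) : 0 ≤ rowSq X ℓ :=
  Finset.sum_nonneg fun _ _ => sq_nonneg _

theorem frobSq_eq_sum_rowSq [Fintype α] (X : Matrix α β ℝ) : frobSq X = ∑ ℓ, rowSq X ℓ :=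
  rfl

theorem rowSq_smul (c : ℝ) (X : Matrix α β ℝ) (ℓ : α) : rowSq (c • X) ℓ = c ^ 2 * rowSq X ℓ := by
  simp only [rowSq, Finset.mul_sum, Matrix.smul_apply, smul_eq_mul, mul_pow]

theorem rowSq_diagonal_mul [Fintype α] [DecidableEq α] (lam : α → ℝ) (X : Matrix α β ℝ)
    (ℓ : α) : rowSq (diagonal lam * X) ℓ = lam ℓ ^ 2 * rowSq X ℓ := by
  simp only [rowSq, Finset.mul_sum, diagonal_mul, mul_pow]

theorem frobSq_smul [Fintype α] (c : ℝ) (X : Matrix α β ℝ) :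
    frobSq (c • X) = c ^ 2 * frobSq X := by
  simp only [frobSq_eq_sum_rowSq, rowSq_smul, Finset.mul_sum]

theorem frobSq_diagonal_mul_pos [Fintype α] [DecidableEq α] {lam : α → ℝ}
    (hlam : ∀ ℓ, 0 < lam ℓ) {X : Matrix α β ℝ} (hX : 0 < frobSq X) :
    0 < frobSq (diagonal lam * X) := by
  rw [frobSq_eq_sum_rowSq] at hX ⊢
  obtain ⟨ℓ, -, hℓ⟩ := Finset.exists_lt_of_sum_lt (by simpa using hX : ∑ _ℓ : α, (0 : ℝ) < _)
  simp only [rowSq_diagonal_mul]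
  exact Finset.sum_pos' (fun ℓ _ => mul_nonneg (sq_nonneg _) (rowSq_nonneg X ℓ))
    ⟨ℓ, Finset.mem_univ ℓ, mul_pos (pow_pos (hlam ℓ) 2) hℓ⟩

theorem frobSq_sub_smul_diagonal_mul_le [Fintype α] [DecidableEq α] (X : Matrix α β ℝ)
    {c : ℝ} (hc : 0 ≤ c) {lam : α → ℝ} (hlam : ∀ ℓ, 0 ≤ lam ℓ) :
    frobSq (X - c • (diagonal lam * X)) ≤
      ∑ ℓ, |rowSq (c • (diagonal lam * X)) ℓ - rowSq X ℓ| := by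
  have hsub : X - c • (diagonal lam * X) = diagonal (fun ℓ => 1 - c * lam ℓ) * X := by
    ext ℓ k; simp only [Matrix.sub_apply, Matrix.smul_apply, diagonal_mul, smul_eq_mul]; ring
  rw [hsub, frobSq_eq_sum_rowSq]
  refine Finset.sum_le_sum fun ℓ _ => ?_
  rw [rowSq_smul, rowSq_diagonal_mul, rowSq_diagonal_mul,
    show c ^ 2 * (lam ℓ ^ 2 * rowSq X ℓ) - rowSq X ℓ = ((c * lam ℓ) ^ 2 - 1) * rowSq X ℓ by ring,
    abs_mul, abs_of_nonneg (rowSq_nonneg X ℓ), abs_sub_comm]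
  exact mul_le_mul_of_nonneg_right
    (sq_one_sub_le_abs_one_sub_sq (mul_nonneg hc (hlam ℓ))) (rowSq_nonneg X ℓ)

end RowSq

section Frames

variable {d n : ℕ} {m : Fin n → ℕ}

theorem frameOp_apply_self (F : ∀ i : Fin n, Matrix (Fin d) (Fin (m i)) ℝ) (ℓ : Fin d) :
    frameOp F ℓ ℓ = ∑ i, rowSq (F i) ℓ := by
  simp only [frameOp, Matrix.sum_apply, mul_apply, transpose_apply, rowSq, sq]

theorem equalNormParseval_of_transformsToRIF {F : ∀ i : Fin n, Matrix (Fin d) (Fin (m i)) ℝ}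
    {A : Matrix (Fin d) (Fin d) ℝ} (hA : TransformsToRIF F (fun _ => (d : ℝ) / n) A)
    (hpos : ∀ i, 0 < frobSq (A * F i)) :
    EqualNormParseval fun i => (√((d : ℝ) / n) / √(frobSq (A * F i))) • (A * F i) := by
  have hsq : ∀ i, (√((d : ℝ) / n) / √(frobSq (A * F i))) ^ 2 = (d : ℝ) / n / frobSq (A * F i) :=
    fun i => by rw [div_pow, Real.sq_sqrt (by positivity), Real.sq_sqrt (hpos i).le]
  refine ⟨?_, fun i => ?_⟩
  · rw [frameOp, ← hA]
    refine Finset.sum_congr rfl fun i _ => ?_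
    rw [transpose_smul, Matrix.smul_mul, Matrix.mul_smul, smul_smul, ← sq, hsq]
  · rw [frobSq_smul, hsq, div_mul_cancel₀ _ (hpos i).ne']

theorem dist2_smul_diagonal_mul_le {G : ∀ i : Fin n, Matrix (Fin d) (Fin (m i)) ℝ}
    {s : Fin n → ℝ} {lam : Fin d → ℝ} (hs : ∀ i, 0 ≤ s i) (hlam : ∀ ℓ, 0 ≤ lam ℓ)
    (hmono : Antitone lam) (hZ : EqualNormParseval fun i => s i • (diagonal lam * G i))
    {α β : ℝ} (hα : 0 ≤ α) (hβ : 0 ≤ β) (hdiag : ∀ ℓ, 1 - α ≤ frameOp G ℓ ℓ)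
    (hnorm : ∀ i, frobSq (G i) ≤ d / n + β) :
    dist2 G (fun i => s i • (diagonal lam * G i)) ≤ 2 * d * (d * α + n * β) + n * β := by
  set Z := fun i => s i • (diagonal lam * G i)
  set a : Fin n → Fin d → ℝ := fun i ℓ => rowSq (Z i) ℓ - rowSq (G i) ℓ
  have hcross : ∀ i, SingleCrossing (a i) := by
    intro i
    have ha : a i = fun ℓ => ((s i * lam ℓ) ^ 2 - 1) * rowSq (G i) ℓ := by
      funext ℓ
      simp only [a, Z, rowSq_smul, rowSq_diagonal_mul]
      ring
    rw [ha]
    exact singleCrossing_sq_sub_one_mul (fun ℓ => mul_nonneg (hs i) (hlam ℓ))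
      (hmono.const_mul (hs i)) (fun ℓ => rowSq_nonneg _ ℓ)
  have hcol : ∀ ℓ, ∑ i, a i ℓ ≤ α := by
    intro ℓ
    rw [Finset.sum_sub_distrib, ← frameOp_apply_self, ← frameOp_apply_self, hZ.1, one_apply_eq]
    linarith [hdiag ℓ]
  have hrow : ∀ i, -β ≤ ∑ ℓ, a i ℓ := by
    intro i
    rw [Finset.sum_sub_distrib, ← frobSq_eq_sum_rowSq, ← frobSq_eq_sum_rowSq, hZ.2 i]
    linarith [hnorm i]
  calc dist2 G Z ≤ ∑ i, ∑ ℓ, |a i ℓ| :=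
        Finset.sum_le_sum fun i _ => frobSq_sub_smul_diagonal_mul_le (G i) (hs i) hlam
    _ ≤ _ := by
        simpa using sum_sum_abs_le_of_singleCrossing hcross hα hβ hcol hrow

end Frames

theorem dist_to_induced_equal_norm_parseval_general {d n : ℕ} (hd : 0 < d) (hn : 0 < n)
    {m : Fin n → ℕ} {ε γ : ℝ} (hε0 : 0 < ε) (hε : ε < 0.3)
    (G : ∀ i : Fin n, Matrix (Fin d) (Fin (m i)) ℝ)
    (hG : NearlyENParseval (4 * ε) G)
    (lam : Fin d → ℝ) (hpos : ∀ ℓ, 0 < lam ℓ) (hmono : Antitone lam)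
    (hRIF : TransformsToRIF G (fun _ => (d : ℝ) / n) (Matrix.diagonal lam))
    (hγε : γ ≤ ε)
    (hγ : ∀ i, (1 - γ) * ((d : ℝ) / n) ≤ frobSq (G i) ∧
      frobSq (G i) ≤ (1 + γ) * ((d : ℝ) / n)) :
    dist2 G (fun i =>
        (Real.sqrt ((d : ℝ) / n) / Real.sqrt (frobSq (Matrix.diagonal lam * G i))) •
          (Matrix.diagonal lam * G i)) ≤ 8 * ε * (d : ℝ) ^ 2 + 4 * γ * (d : ℝ) ^ 2 ∧
    EqualNormParseval (fun i =>
        (Real.sqrt ((d : ℝ) / n) / Real.sqrt (frobSq (Matrix.diagonal lam * G i))) •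
          (Matrix.diagonal lam * G i)) := by
  have hdn : 0 < (d : ℝ) / n := by positivity
  have hγ0 : 0 ≤ γ := by
    obtain ⟨hlow, hup⟩ := hγ ⟨0, hn⟩
    nlinarith
  have hGpos : ∀ i, 0 < frobSq (G i) := fun i =>
    (mul_pos (by norm_num at hε; linarith) hdn).trans_le (hγ i).1
  have hZ := equalNormParseval_of_transformsToRIF hRIF
    fun i => frobSq_diagonal_mul_pos hpos (hGpos i)
  refine ⟨?_, hZ⟩
  have hdiag : ∀ ℓ, 1 - 4 * ε ≤ frameOp G ℓ ℓ := fun ℓ => by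
    simpa using hG.1.diag_nonneg (i := ℓ)
  calc _ ≤ 2 * d * (d * (4 * ε) + n * (γ * (d / n))) + n * (γ * (d / n)) :=
        dist2_smul_diagonal_mul_le (fun i => by positivity) (fun ℓ => (hpos ℓ).le) hmono hZ
          (by positivity) (by positivity) hdiag fun i => by linarith [(hγ i).2]
    _ ≤ 8 * ε * (d : ℝ) ^ 2 + 4 * γ * (d : ℝ) ^ 2 := by
        have hd1 : (1 : ℝ) ≤ d := by exact_mod_cast hd
        field_simp
        nlinarith [mul_le_mul_of_nonneg_left hd1 (mul_nonneg hγ0 (zero_le_one.trans hd1))]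

/-- **Lemma (distance to the induced equal-norm Parseval frame).**  Let `G` be a
`4ε`-nearly equal-norm Parseval matrix frame (`0 < ε < 0.3`), `M = diag(λ₁ ≥ … ≥ λ_d > 0)`
a diagonal matrix such that `(M·Y₁, …, M·Yₙ)` is a radial isotropic frame for the weight
`c = (d/n, …, d/n)`, and `Z` the induced equal-norm Parseval frame
`Zᵢ = √(d/n) · M·Yᵢ / ‖M·Yᵢ‖_F`.  If `γ ≤ min{1, ε}` satisfies
`(1−γ) d/n ≤ ‖Yᵢ‖_F² ≤ (1+γ) d/n` for all `i`, then `dist²(G, Z) ≤ 8εd² + 4γd²`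
(and `Z` is an equal-norm Parseval matrix frame). -/
theorem dist_to_induced_equal_norm_parseval {d n : ℕ} (hd : 0 < d) (hn : 0 < n)
    {m : Fin n → ℕ} {ε γ : ℝ} (hε0 : 0 < ε) (hε : ε < 0.3)
    (G : ∀ i : Fin n, Matrix (Fin d) (Fin (m i)) ℝ)
    (hG : NearlyENParseval (4 * ε) G)
    (lam : Fin d → ℝ) (hpos : ∀ ℓ, 0 < lam ℓ) (hmono : Antitone lam)
    (hRIF : TransformsToRIF G (fun _ => (d : ℝ) / n) (Matrix.diagonal lam))
    (hγ1 : γ ≤ 1) (hγε : γ ≤ ε)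
    (hγ : ∀ i, (1 - γ) * ((d : ℝ) / n) ≤ frobSq (G i) ∧
      frobSq (G i) ≤ (1 + γ) * ((d : ℝ) / n)) :
    dist2 G (fun i =>
        (Real.sqrt ((d : ℝ) / n) / Real.sqrt (frobSq (Matrix.diagonal lam * G i))) •
          (Matrix.diagonal lam * G i)) ≤ 8 * ε * (d : ℝ) ^ 2 + 4 * γ * (d : ℝ) ^ 2 ∧
    EqualNormParseval (fun i =>
        (Real.sqrt ((d : ℝ) / n) / Real.sqrt (frobSq (Matrix.diagonal lam * G i))) •
          (Matrix.diagonal lam * G i)) :=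
  dist_to_induced_equal_norm_parseval_general hd hn hε0 hε G hG lam hpos hmono hRIF hγε hγ

end MFrames
end

section
/- (Majorization step.) Let Y ∈ ℝ^{d×m} be a nonzero matrix, let λ_1 ≥ λ_2 ≥ … ≥ λ_d > 0 and M = diag(λ_1,…,λ_d), and set w = (‖Y‖_F/‖M·Y‖_F)·M·Y ∈ ℝ^{d×m}. Define a_ℓ = ∑_{k=1}^m w_{ℓk}² and b_ℓ = ∑_{k=1}^m Y_{ℓk}² for ℓ = 1,…,d. Then the vector a majorizes b: ∑_{ℓ=1}^d a_ℓ = ∑_{ℓ=1}^d b_ℓ and ∑_{ℓ=1}^j a_ℓ ≥ ∑_{ℓ=1}^j b_ℓ for every 1 ≤ j < d. -/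
open scoped BigOperators
open Matrix

namespace MFrames

/-- **Majorization step.**  Let `Y ≠ 0`, `M = diag(λ₁ ≥ … ≥ λ_d > 0)` and
`w = (‖Y‖_F / ‖M·Y‖_F) · M·Y`.  Then the vector `a` of squared row norms of `w` majorizes
the vector `b` of squared row norms of `Y`: the total sums agree and every partial sum of
`a` (over the first `j` rows) dominates that of `b`. -/
theorem majorization_step {d k : ℕ} (Y : Matrix (Fin d) (Fin k) ℝ) (hY : Y ≠ 0)
    (lam : Fin d → ℝ) (hpos : ∀ ℓ, 0 < lam ℓ) (hmono : Antitone lam) :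
    (∑ ℓ, ∑ k',
        ((Real.sqrt (frobSq Y) / Real.sqrt (frobSq (Matrix.diagonal lam * Y))) •
          (Matrix.diagonal lam * Y)) ℓ k' ^ 2) = (∑ ℓ, ∑ k', Y ℓ k' ^ 2) ∧
    ∀ j : ℕ, j < d →
      ∑ ℓ ∈ Finset.univ.filter (fun ℓ : Fin d => (ℓ : ℕ) < j), (∑ k', Y ℓ k' ^ 2) ≤
        ∑ ℓ ∈ Finset.univ.filter (fun ℓ : Fin d => (ℓ : ℕ) < j), (∑ k',
          ((Real.sqrt (frobSq Y) / Real.sqrt (frobSq (Matrix.diagonal lam * Y))) •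
            (Matrix.diagonal lam * Y)) ℓ k' ^ 2) := by
  classical
  set b : Fin d → ℝ := fun ℓ => ∑ k', Y ℓ k' ^ 2 with hb
  have hbnn : ∀ ℓ, 0 ≤ b ℓ := fun ℓ => Finset.sum_nonneg fun _ _ => sq_nonneg _
  have hA : frobSq Y = ∑ ℓ, b ℓ := rfl
  have hA0 : 0 < frobSq Y := by
    obtain ⟨i, j, hij⟩ : ∃ i j, Y i j ≠ 0 := by
      by_contra h; push_neg at h; exact hY (by ext i j; simpa using h i j)
    have h1 : Y i j ^ 2 ≤ ∑ j', Y i j' ^ 2 :=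
      Finset.single_le_sum (f := fun j' => Y i j' ^ 2) (fun _ _ => sq_nonneg _)
        (Finset.mem_univ j)
    have h2 : (∑ j', Y i j' ^ 2) ≤ frobSq Y :=
      Finset.single_le_sum (f := fun i => ∑ j', Y i j' ^ 2)
        (fun _ _ => Finset.sum_nonneg fun _ _ => sq_nonneg _) (Finset.mem_univ i)
    have h0 : 0 < Y i j ^ 2 := by positivity
    linarith
  have hentry : ∀ ℓ k', (Matrix.diagonal lam * Y) ℓ k' = lam ℓ * Y ℓ k' := by
    intro ℓ k'
    simp [Matrix.mul_apply, Matrix.diagonal_apply, Finset.sum_ite_eq]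
  have hB : frobSq (Matrix.diagonal lam * Y) = ∑ ℓ, lam ℓ ^ 2 * b ℓ := by
    unfold frobSq
    refine Finset.sum_congr rfl fun ℓ _ => ?_
    rw [hb, Finset.mul_sum]
    refine Finset.sum_congr rfl fun k' _ => ?_
    rw [hentry]; ring
  have hB0 : 0 < frobSq (Matrix.diagonal lam * Y) := by
    rw [hB]
    obtain ⟨i, hi⟩ : ∃ i, 0 < b i := by
      by_contra h
      push_neg at h
      have hle : (∑ ℓ, b ℓ) ≤ 0 := Finset.sum_nonpos fun ℓ _ => h ℓ
      rw [hA] at hA0; linarith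
    have h0 : 0 < lam i ^ 2 * b i := by have := hpos i; positivity
    have h1 : lam i ^ 2 * b i ≤ ∑ ℓ, lam ℓ ^ 2 * b ℓ := Finset.single_le_sum
        (f := fun ℓ => lam ℓ ^ 2 * b ℓ)
        (fun ℓ _ => by have := hbnn ℓ; have := (hpos ℓ); positivity) (Finset.mem_univ i)
    linarith
  set c : ℝ := Real.sqrt (frobSq Y) / Real.sqrt (frobSq (Matrix.diagonal lam * Y)) with hc
  have hcsq : c ^ 2 = frobSq Y / frobSq (Matrix.diagonal lam * Y) := by
    rw [hc, div_pow, Real.sq_sqrt hA0.le, Real.sq_sqrt hB0.le]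
  have hterm : ∀ ℓ, (∑ k', ((c • (Matrix.diagonal lam * Y)) ℓ k') ^ 2)
      = c ^ 2 * (lam ℓ ^ 2 * b ℓ) := by
    intro ℓ
    rw [hb, Finset.mul_sum, Finset.mul_sum]
    refine Finset.sum_congr rfl fun k' _ => ?_
    rw [Matrix.smul_apply, hentry, smul_eq_mul]; ring
  constructor
  · calc ∑ ℓ, ∑ k', ((c • (Matrix.diagonal lam * Y)) ℓ k') ^ 2
        = ∑ ℓ, c ^ 2 * (lam ℓ ^ 2 * b ℓ) := Finset.sum_congr rfl fun ℓ _ => hterm ℓ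
      _ = c ^ 2 * ∑ ℓ, lam ℓ ^ 2 * b ℓ := by rw [Finset.mul_sum]
      _ = frobSq Y := by rw [hcsq, ← hB]; field_simp
      _ = ∑ ℓ, b ℓ := hA
  · intro j hj
    set F := Finset.univ.filter (fun ℓ : Fin d => (ℓ : ℕ) < j) with hF
    have hsplit : ∀ g : Fin d → ℝ, (∑ ℓ, g ℓ) = ∑ ℓ ∈ F, g ℓ + ∑ ℓ ∈ Fᶜ, g ℓ := by
      intro g
      rw [add_comm, Finset.sum_compl_add_sum]
    set lj : ℝ := lam ⟨j, hj⟩ with hlj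
    have hS : lj ^ 2 * ∑ ℓ ∈ F, b ℓ ≤ ∑ ℓ ∈ F, lam ℓ ^ 2 * b ℓ := by
      rw [Finset.mul_sum]
      refine Finset.sum_le_sum fun ℓ hℓ => ?_
      have hℓj : lj ≤ lam ℓ := hmono (by
        simp only [hF, Finset.mem_filter] at hℓ
        exact_mod_cast (le_of_lt hℓ.2))
      have : lj ^ 2 ≤ lam ℓ ^ 2 := pow_le_pow_left₀ (hpos _).le hℓj 2
      exact mul_le_mul_of_nonneg_right this (hbnn ℓ)
    have hT : ∑ ℓ ∈ Fᶜ, lam ℓ ^ 2 * b ℓ ≤ lj ^ 2 * ∑ ℓ ∈ Fᶜ, b ℓ := by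
      rw [Finset.mul_sum]
      refine Finset.sum_le_sum fun ℓ hℓ => ?_
      have hℓj : lam ℓ ≤ lj := hmono (by
        simp only [hF, Finset.mem_compl, Finset.mem_filter, Finset.mem_univ, true_and,
          not_lt] at hℓ
        exact_mod_cast hℓ)
      have : lam ℓ ^ 2 ≤ lj ^ 2 := pow_le_pow_left₀ (hpos _).le hℓj 2
      exact mul_le_mul_of_nonneg_right this (hbnn ℓ)
    have hgoal : ∑ ℓ ∈ F, ∑ k', ((c • (Matrix.diagonal lam * Y)) ℓ k') ^ 2
        = c ^ 2 * ∑ ℓ ∈ F, lam ℓ ^ 2 * b ℓ := by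
      rw [Finset.mul_sum]
      exact Finset.sum_congr rfl fun ℓ _ => hterm ℓ
    rw [hgoal, hcsq]
    have hB1 : (0:ℝ) ≤ ∑ ℓ ∈ F, b ℓ := Finset.sum_nonneg fun ℓ _ => hbnn ℓ
    have hB2 : (0:ℝ) ≤ ∑ ℓ ∈ Fᶜ, b ℓ := Finset.sum_nonneg fun ℓ _ => hbnn ℓ
    rw [hA, hB, hsplit b, hsplit (fun ℓ => lam ℓ ^ 2 * b ℓ)]
    rw [div_mul_eq_mul_div, le_div_iff₀ (by rw [hB, hsplit (fun ℓ => lam ℓ ^ 2 * b ℓ)] at hB0; exact hB0)]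
    nlinarith [mul_le_mul hS hT (Finset.sum_nonneg fun ℓ (_ : ℓ ∈ Fᶜ) => by have := hbnn ℓ; have := hpos ℓ; positivity) (by positivity : (0:ℝ) ≤ ∑ ℓ ∈ F, lam ℓ ^ 2 * b ℓ), mul_nonneg hB1 hB2]


end MFrames
end

section
/- (Cauchy–Binet expansion of the frame determinant.) Let X_1, …, X_n be real matrices with X_i ∈ ℝ^{d×d_i}. Then for every t = (t_1,…,t_n) ∈ ℝ^n, det(∑_{i=1}^n e^{t_i} X_i·X_iᵀ) = ∑_{S∈𝒜} e^{∑_{ℓ∈S} |S_ℓ|·t_ℓ}·Δ_S. -/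
open scoped BigOperators
open Matrix

namespace MFrames

lemma det_sum_smul_rank_one {d : ℕ} {ι : Type*} [Fintype ι] [DecidableEq ι]
    (c : ι → ℝ) (v : ι → Fin d → ℝ) :
    (∑ p, c p • Matrix.of (fun r s : Fin d => v p r * v p s)).det
      = ∑ S ∈ Finset.univ.powersetCard d,
          (∏ p ∈ S, c p) *
            (∑ p ∈ S, Matrix.of (fun r s : Fin d => v p r * v p s)).det := by
  classical
  set f := (Matrix.detRowAlternating : (Fin d → ℝ) [⋀^Fin d]→ₗ[ℝ] ℝ) with hf
  set T : (Fin d → ι) → ℝ := fun g => (∏ r, v (g r) r) * f (fun r => v (g r)) with hT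
  have expand : ∀ (s : Finset ι) (a : ι → ℝ),
      (∑ p ∈ s, a p • Matrix.of (fun r q : Fin d => v p r * v p q)).det
        = ∑ g ∈ Fintype.piFinset (fun _ : Fin d => s),
            (∏ r, a (g r)) * T g := by
    intro s a
    have hM : (∑ p ∈ s, a p • Matrix.of (fun r q : Fin d => v p r * v p q))
        = fun r => ∑ p ∈ s, (a p * v p r) • v p := by
      funext r q
      simp only [Matrix.sum_apply, Matrix.smul_apply, Matrix.of_apply, smul_eq_mul,
        Finset.sum_apply, Pi.smul_apply, mul_assoc]
    have h1 : (∑ p ∈ s, a p • Matrix.of (fun r q : Fin d => v p r * v p q)).det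
        = f.toMultilinearMap (fun r => ∑ p ∈ s, (a p * v p r) • v p) := by rw [hM]; rfl
    rw [h1,
      f.toMultilinearMap.map_sum_finset (fun r p => (a p * v p r) • v p) (fun _ => s)]
    refine Finset.sum_congr rfl fun g _ => ?_
    have h2 := f.toMultilinearMap.map_smul_univ (fun r => a (g r) * v (g r) r)
      (fun r => v (g r))
    rw [h2, smul_eq_mul, Finset.prod_mul_distrib, mul_assoc]
    rfl
  have hT0 : ∀ g : Fin d → ι, ¬ Function.Injective g → T g = 0 := by
    intro g hg
    have hg' : ¬ Function.Injective (fun r => v (g r)) := fun h =>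
      hg fun x y hxy => h (by simp only [hxy])
    rw [hT]
    simp [f.map_eq_zero_of_not_injective _ hg']
  have hL := expand Finset.univ c
  have hR : ∀ S : Finset ι,
      (∑ p ∈ S, Matrix.of (fun r q : Fin d => v p r * v p q)).det
        = ∑ g ∈ Fintype.piFinset (fun _ : Fin d => S), T g := by
    intro S
    have h := expand S (fun _ => 1)
    simpa using h
  have step1 : ∑ g ∈ Fintype.piFinset (fun _ : Fin d => (Finset.univ : Finset ι)),
        (∏ r, c (g r)) * T g
      = ∑ g ∈ Finset.univ.filter (fun g : Fin d → ι => Function.Injective g),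
          (∏ r, c (g r)) * T g := by
    rw [Fintype.piFinset_univ]
    refine (Finset.sum_filter_of_ne (fun g _ hne => ?_)).symm
    by_contra h
    exact hne (by rw [hT0 g h, mul_zero])
  have step2 : ∀ S : Finset ι,
      ∑ g ∈ Fintype.piFinset (fun _ : Fin d => S), T g
        = ∑ g ∈ (Fintype.piFinset (fun _ : Fin d => S)).filter
            (fun g => Function.Injective g), T g := by
    intro S
    refine (Finset.sum_filter_of_ne (fun g _ hne => ?_)).symm
    by_contra h
    exact hne (hT0 g h)
  rw [hL, step1]
  have hRHS : ∑ S ∈ Finset.univ.powersetCard d,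
        (∏ p ∈ S, c p) * (∑ p ∈ S, Matrix.of (fun r q : Fin d => v p r * v p q)).det
      = ∑ x ∈ (Finset.univ.powersetCard d).sigma
            (fun S => (Fintype.piFinset (fun _ : Fin d => S)).filter
              (fun g => Function.Injective g)),
          (∏ p ∈ x.1, c p) * T x.2 := by
    rw [Finset.sum_sigma]
    exact Finset.sum_congr rfl fun S _ => by rw [hR S, step2 S, Finset.mul_sum]
  rw [hRHS]
  refine Finset.sum_bij' (fun g _ => (⟨Finset.univ.image g, g⟩ :
      Σ S : Finset ι, Fin d → ι)) (fun x _ => x.2) ?_ ?_ ?_ ?_ ?_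
  · intro g hg
    rw [Finset.mem_filter] at hg
    refine Finset.mem_sigma.2 ⟨Finset.mem_powersetCard_univ.2 ?_,
      Finset.mem_filter.2 ⟨Fintype.mem_piFinset.2 fun r =>
        Finset.mem_image_of_mem g (Finset.mem_univ r), hg.2⟩⟩
    rw [Finset.card_image_of_injective _ hg.2, Finset.card_univ, Fintype.card_fin]
  · intro x hx
    rw [Finset.mem_sigma, Finset.mem_filter] at hx
    exact Finset.mem_filter.2 ⟨Finset.mem_univ _, hx.2.2⟩
  · intro g hg
    rfl
  · intro x hx
    rw [Finset.mem_sigma, Finset.mem_filter, Fintype.mem_piFinset] at hx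
    have hsub : Finset.univ.image x.2 ⊆ x.1 :=
      Finset.image_subset_iff.2 fun r _ => hx.2.1 r
    have hcard : x.1.card ≤ (Finset.univ.image x.2).card := by
      rw [Finset.card_image_of_injective _ hx.2.2, Finset.card_univ,
        Fintype.card_fin, Finset.mem_powersetCard_univ.1 hx.1]
    have : Finset.univ.image x.2 = x.1 := Finset.eq_of_subset_of_card_le hsub hcard
    obtain ⟨S, g⟩ := x
    simp only at this ⊢
    subst this
    rfl
  · intro g hg
    rw [Finset.mem_filter] at hg
    have := Finset.prod_image (f := c) (g := g) (s := Finset.univ)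
      (fun x _ y _ h => hg.2 h)
    simp only [this]

/-- **Cauchy–Binet expansion of the frame determinant.**  For any tuple of matrices,
`det (∑ e^{tᵢ} Xᵢ Xᵢᵀ) = ∑_{S∈𝒜} e^{∑_{ℓ∈S} |S_ℓ| t_ℓ} · Δ_S`. -/
theorem cauchy_binet_frame {d n : ℕ} {m : Fin n → ℕ}
    (F : ∀ i : Fin n, Matrix (Fin d) (Fin (m i)) ℝ) (t : Fin n → ℝ) :
    (∑ i, Real.exp (t i) • (F i * (F i)ᵀ)).det
      = ∑ σ ∈ indexA d m, Real.exp (∑ l, ((σ l).card : ℝ) * t l) * Delta F σ := by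
  have hA : indexA d m = (Finset.univ.filter
      fun σ : ∀ i : Fin n, Finset (Fin (m i)) => (∑ i, (σ i).card) = d) := rfl
  rw [hA]
  classical
  have h0 : (∑ i, Real.exp (t i) • (F i * (F i)ᵀ))
      = ∑ p : Σ i : Fin n, Fin (m i),
          Real.exp (t p.1) • Matrix.of (fun r s : Fin d => F p.1 r p.2 * F p.1 s p.2) := by
    rw [← Finset.univ_sigma_univ, Finset.sum_sigma]
    refine Finset.sum_congr rfl fun i _ => ?_
    ext r s
    simp [Matrix.mul_apply, Finset.mul_sum, Matrix.sum_apply]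
  rw [h0, det_sum_smul_rank_one]
  refine Finset.sum_bij'
    (fun (S : Finset (Σ i : Fin n, Fin (m i))) _ =>
      fun l => Finset.univ.filter fun k => (⟨l, k⟩ : Σ i : Fin n, Fin (m i)) ∈ S)
    (fun σ _ => Finset.univ.sigma σ) ?_ ?_ ?_ ?_ ?_
  · intro S hS
    have hSe : S = Finset.univ.sigma
        (fun l => Finset.univ.filter fun k => (⟨l, k⟩ : Σ i : Fin n, Fin (m i)) ∈ S) := by
      ext ⟨l, k⟩; simp [Finset.mem_sigma]
    simp only [Finset.mem_filter, Finset.mem_univ, true_and]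
    rw [← Finset.card_sigma, ← hSe]
    exact Finset.mem_powersetCard_univ.1 hS
  · intro σ hσ
    rw [Finset.mem_filter] at hσ
    refine Finset.mem_powersetCard_univ.2 ?_
    rw [Finset.card_sigma]
    exact hσ.2
  · intro S hS
    ext ⟨l, k⟩
    simp [Finset.mem_sigma]
  · intro σ hσ
    funext l
    ext k
    simp [Finset.mem_sigma]
  · intro S hS
    have hSe : S = Finset.univ.sigma
        (fun l => Finset.univ.filter fun k => (⟨l, k⟩ : Σ i : Fin n, Fin (m i)) ∈ S) := by
      ext ⟨l, k⟩; simp [Finset.mem_sigma]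
    set σ := fun l => Finset.univ.filter fun k => (⟨l, k⟩ : Σ i : Fin n, Fin (m i)) ∈ S with hσ
    conv_lhs => rw [hSe]
    rw [Finset.prod_sigma, Finset.sum_sigma]
    congr 1
    calc ∏ l, ∏ _k ∈ σ l, Real.exp (t l)
        = ∏ l, Real.exp (((σ l).card : ℝ) * t l) := by
          refine Finset.prod_congr rfl fun l _ => ?_
          rw [Finset.prod_const, ← Real.exp_nat_mul]
      _ = Real.exp (∑ l, ((σ l).card : ℝ) * t l) := (Real.exp_sum _ _).symm



end MFrames
end

section
/- Let Q be a finite connected acyclic quiver, d a dimension vector, V a real representation of Q of dimension vector d, and σ ∈ ℤ^{Q₀} a weight. If V is σ-polystable, then σ lies in the relative (intrinsic) interior of the orbit cone Ω(V). -/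
open scoped BigOperators
open Matrix

namespace QuiverRI

variable {V A : Type}

/-- A real representation, of dimension vector `dv`, of the quiver with vertex set `V`,
arrow set `A`, and each arrow `a : src a → tgt a`: a matrix in
`ℝ^{dv(tgt a) × dv(src a)}` for every arrow `a`. -/
def Rep (src tgt : A → V) (dv : V → ℕ) : Type :=
  ∀ a : A, Matrix (Fin (dv (tgt a))) (Fin (dv (src a))) ℝ

/-- A subrepresentation of `R`: a family of subspaces `space x ⊆ ℝ^{dv x}` invariant under
all the structure maps of `R`. -/
structure Subrep (src tgt : A → V) (dv : V → ℕ) (R : Rep src tgt dv) where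
  space : ∀ x : V, Submodule ℝ (Fin (dv x) → ℝ)
  invariant : ∀ a : A, ∀ v ∈ space (src a), (R a).mulVec v ∈ space (tgt a)

/-- The orbit cone `Ω(V)` of a representation: all real weights `σ` with `σ · dim R = 0`
and `σ · dim W ≤ 0` for every subrepresentation `W`. -/
def OrbitCone [Fintype V] (src tgt : A → V) (dv : V → ℕ) (R : Rep src tgt dv) :
    Set (V → ℝ) :=
  {σ | (∑ x, σ x * dv x) = 0 ∧
    ∀ W : Subrep src tgt dv R, (∑ x, σ x * Module.finrank ℝ (W.space x)) ≤ 0}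

/-- A subrepresentation `W` of `R` is `σ`-stable (as a representation in its own right;
its subrepresentations are exactly the subrepresentations of `R` contained in `W`):
`σ · dim W = 0` and `σ · dim W' < 0` for every subrepresentation `W' ⊆ W` other than
`0` and `W`. -/
def IsStableSub [Fintype V] (src tgt : A → V) (dv : V → ℕ) (R : Rep src tgt dv)
    (σ : V → ℤ) (W : Subrep src tgt dv R) : Prop :=
  (∑ x, σ x * (Module.finrank ℝ (W.space x) : ℤ)) = 0 ∧
  ∀ W' : Subrep src tgt dv R, (∀ x, W'.space x ≤ W.space x) →
    W'.space ≠ (fun x => (⊥ : Submodule ℝ (Fin (dv x) → ℝ))) → W'.space ≠ W.space →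
    (∑ x, σ x * (Module.finrank ℝ (W'.space x) : ℤ)) < 0

/-- `R` is `σ`-polystable: it is the internal direct sum, at every vertex, of finitely many
`σ`-stable subrepresentations. -/
def IsPolystable [Fintype V] (src tgt : A → V) (dv : V → ℕ) (R : Rep src tgt dv)
    (σ : V → ℤ) : Prop :=
  ∃ (k : ℕ) (W : Fin k → Subrep src tgt dv R),
    (∀ x : V, DirectSum.IsInternal (fun j : Fin k => (W j).space x)) ∧
    ∀ j, IsStableSub src tgt dv R σ (W j)

/-- `R` is locally semi-simple: `σ₀`-polystable for some integral weight `σ₀`. -/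
def LocallySemisimple [Fintype V] (src tgt : A → V) (dv : V → ℕ)
    (R : Rep src tgt dv) : Prop :=
  ∃ σ₀ : V → ℤ, IsPolystable src tgt dv R σ₀

/-- `R` is `σ`-critical:
`∑_{a : src a = x} (R a)ᵀ (R a) − ∑_{a : tgt a = x} (R a)(R a)ᵀ = σ(x) I` at each vertex. -/
def IsCritical [Fintype V] [Fintype A] [DecidableEq V] (src tgt : A → V) (dv : V → ℕ)
    (R : Rep src tgt dv) (σ : V → ℤ) : Prop :=
  ∀ x : V,
    ((∑ a : A, if h : src a = x then
        Matrix.reindex (finCongr (congrArg dv h)) (finCongr (congrArg dv h)) ((R a)ᵀ * R a)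
      else 0) -
     (∑ a : A, if h : tgt a = x then
        Matrix.reindex (finCongr (congrArg dv h)) (finCongr (congrArg dv h)) (R a * (R a)ᵀ)
      else 0))
    = (σ x : ℝ) • (1 : Matrix (Fin (dv x)) (Fin (dv x)) ℝ)

/-- The base-change action of `∏_x GL(dv x)` on representations:
`(A · R)(a) = A(tgt a) · R(a) · A(src a)⁻¹`. -/
noncomputable def act (src tgt : A → V) (dv : V → ℕ)
    (Amat : ∀ x : V, Matrix (Fin (dv x)) (Fin (dv x)) ℝ) (R : Rep src tgt dv) :
    Rep src tgt dv :=
  fun a => Amat (tgt a) * R a * (Amat (src a))⁻¹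

/-- The quiver is connected (as an undirected graph). -/
def Connected (src tgt : A → V) : Prop :=
  ∀ x y : V, Relation.ReflTransGen
    (fun u v => ∃ a : A, (src a = u ∧ tgt a = v) ∨ (src a = v ∧ tgt a = u)) x y

/-- The quiver is acyclic: it admits a strictly monotone grading of its vertices
(equivalently, it has no directed cycles). -/
def Acyclic (src tgt : A → V) : Prop :=
  ∃ r : V → ℕ, ∀ a : A, r (src a) < r (tgt a)

end QuiverRI

/-!
Write `R = S₀ ⊕ ⋯ ⊕ S_{k-1}` with every `Sᵢ` σ-stable. A subrepresentation `W` is filtered by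
`W ∩ (S₀ ⊕ ⋯ ⊕ Sᵢ)`, and projecting to `Sᵢ` identifies the `i`-th subquotient with a
subrepresentation `Wᵢ ⊆ Sᵢ`, so `dim W = ∑ dim Wᵢ`. Stability of `Sᵢ` gives `σ · dim Wᵢ ≤ 0`, with
equality only for `Wᵢ ∈ {0, Sᵢ}`; hence `σ ∈ Ω(R)`, and `σ · dim W = 0` forces `dim W` to be a sum
of some `dim Sᵢ`. Every `τ ∈ Ω(R)` has `τ · dim Sᵢ = 0`, as these are `≤ 0` and add up to
`τ · dim R = 0`. So the inequalities active at `σ` are equalities on all of `Ω(R)`; only finitely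
many dimension vectors occur, so near `σ` the others stay strict and a neighbourhood of `σ` in
the affine span of `Ω(R)` lies in `Ω(R)`.
-/

open Module

theorem Submodule.finrank_map_add_finrank_inf_ker {K M N : Type*} [DivisionRing K]
    [AddCommGroup M] [Module K M] [AddCommGroup N] [Module K N] (f : M →ₗ[K] N)
    (U : Submodule K M) [FiniteDimensional K U] :
    finrank K (U.map f) + finrank K (U ⊓ LinearMap.ker f : Submodule K M) = finrank K U := by
  have hker : LinearMap.ker (f.domRestrict U) = (U ⊓ LinearMap.ker f).comap U.subtype := by
    ext v; simp
  rw [← (f.domRestrict U).finrank_range_add_finrank_ker, LinearMap.range_domRestrict, hker,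
    (Submodule.comapSubtypeEquivOfLe inf_le_left).finrank_eq]

namespace DirectSum.IsInternal

section Semiring

variable {R M N ι : Type*} [Semiring R] [AddCommMonoid M] [Module R M] [AddCommMonoid N]
  [Module R N] [DecidableEq ι] {A : ι → Submodule R M} {B : ι → Submodule R N}

noncomputable def proj (h : IsInternal A) (i : ι) : M →ₗ[R] M :=
  (A i).subtype ∘ₗ DirectSum.component R ι (fun i => A i) i ∘ₗ
    (LinearEquiv.ofBijective (DirectSum.coeLinearMap A) h).symm.toLinearMap

variable (h : IsInternal A)

theorem proj_apply (i : ι) (v : M) :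
    h.proj i v = ((LinearEquiv.ofBijective (DirectSum.coeLinearMap A) h).symm v i : M) :=
  rfl

theorem proj_mem (i : ι) (v : M) : h.proj i v ∈ A i :=
  Subtype.prop _

theorem proj_of_mem_same {i : ι} {v : M} (hv : v ∈ A i) : h.proj i v = v := by
  rw [proj_apply, h.ofBijective_coeLinearMap_of_mem hv]

theorem proj_of_mem_ne {i j : ι} (hij : i ≠ j) {v : M} (hv : v ∈ A i) : h.proj j v = 0 := by
  rw [proj_apply, h.ofBijective_coeLinearMap_of_mem_ne hij hv, Submodule.coe_zero]

theorem eq_zero_of_forall_proj_eq_zero {v : M} (hv : ∀ i, h.proj i v = 0) : v = 0 := by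
  have : (LinearEquiv.ofBijective (DirectSum.coeLinearMap A) h).symm v = 0 :=
    DFinsupp.ext fun i => Subtype.ext (hv i)
  simpa using this

theorem proj_map (h' : IsInternal B) (f : M →ₗ[R] N) (hf : ∀ i, A i ≤ (B i).comap f) (i : ι)
    (v : M) : h'.proj i (f v) = f (h.proj i v) := by
  have hv : v ∈ ⨆ j, A j := h.submodule_iSup_eq_top ▸ Submodule.mem_top
  refine Submodule.iSup_induction (motive := fun v => h'.proj i (f v) = f (h.proj i v)) _ hv
    (fun j w hw => ?_) (by simp only [map_zero]) (fun a b ha hb => by simp only [map_add, ha, hb])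
  rcases eq_or_ne j i with rfl | hne
  · rw [h.proj_of_mem_same hw, h'.proj_of_mem_same (hf j hw)]
  · rw [h.proj_of_mem_ne hne hw, h'.proj_of_mem_ne hne (hf j hw), map_zero]

variable {k : ℕ} {A : Fin k → Submodule R M} {B : Fin k → Submodule R N} (h : IsInternal A)

/-- `h.filtration m` is the sum of the first `m` summands. -/
noncomputable def filtration (m : ℕ) : Submodule R M :=
  ⨅ (j : Fin k) (_ : m ≤ (j : ℕ)), LinearMap.ker (h.proj j)

theorem mem_filtration {m : ℕ} {v : M} :
    v ∈ h.filtration m ↔ ∀ j : Fin k, m ≤ (j : ℕ) → h.proj j v = 0 := by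
  simp only [filtration, Submodule.mem_iInf, LinearMap.mem_ker]

theorem filtration_zero : h.filtration 0 = ⊥ :=
  eq_bot_iff.2 fun _ hv =>
    h.eq_zero_of_forall_proj_eq_zero fun j => (h.mem_filtration.1 hv) j (Nat.zero_le _)

theorem filtration_top : h.filtration k = ⊤ :=
  eq_top_iff.2 fun _ _ => h.mem_filtration.2 fun j hj => absurd j.2 (not_lt.2 hj)

theorem filtration_eq_inf_ker (i : Fin k) :
    h.filtration i = h.filtration (i + 1) ⊓ LinearMap.ker (h.proj i) := by
  ext v
  simp only [Submodule.mem_inf, mem_filtration, LinearMap.mem_ker]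
  refine ⟨fun hv => ⟨fun j hj => hv j (by omega), hv i le_rfl⟩, fun ⟨hv, hi⟩ j hj => ?_⟩
  rcases eq_or_ne j i with rfl | hne
  · exact hi
  · exact hv j (by have := Fin.val_ne_of_ne hne; omega)

theorem mem_filtration_succ {i : Fin k} {v : M} (hv : v ∈ A i) : v ∈ h.filtration (i + 1) :=
  h.mem_filtration.2 fun _ hj => h.proj_of_mem_ne (Fin.ne_of_val_ne (by omega)) hv

theorem map_mem_filtration (h' : IsInternal B) (f : M →ₗ[R] N) (hf : ∀ i, A i ≤ (B i).comap f)
    {m : ℕ} {v : M} (hv : v ∈ h.filtration m) : f v ∈ h'.filtration m :=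
  h'.mem_filtration.2 fun j hj => by
    rw [h.proj_map h' f hf, h.mem_filtration.1 hv j hj, map_zero]

end Semiring

section DivisionRing

variable {K M : Type*} [DivisionRing K] [AddCommGroup M] [Module K M] [FiniteDimensional K M]
  {k : ℕ} {A : Fin k → Submodule K M} (h : IsInternal A)

theorem finrank_inf_filtration (U : Submodule K M) {m : ℕ} (hm : m ≤ k) :
    finrank K (U ⊓ h.filtration m : Submodule K M) =
      ∑ i ∈ Finset.univ.filter (fun i : Fin k => (i : ℕ) < m),
        finrank K ((U ⊓ h.filtration (i + 1)).map (h.proj i)) := by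
  induction m with
  | zero => simp [filtration_zero]
  | succ m ih =>
    let i : Fin k := ⟨m, hm⟩
    have hstep := Submodule.finrank_map_add_finrank_inf_ker (h.proj i) (U ⊓ h.filtration (m + 1))
    have hfilter : Finset.univ.filter (fun j : Fin k => (j : ℕ) < m + 1) =
        insert i (Finset.univ.filter (fun j : Fin k => (j : ℕ) < m)) := by
      ext j
      simp only [Finset.mem_filter, Finset.mem_univ, true_and, Finset.mem_insert, Fin.ext_iff, i]
      omega
    rw [inf_assoc, ← h.filtration_eq_inf_ker i] at hstep
    rw [hfilter, Finset.sum_insert (by simp [i]), ← ih (by omega)]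
    exact hstep.symm

theorem finrank_eq_sum_finrank_map_proj (U : Submodule K M) :
    finrank K U = ∑ i : Fin k, finrank K ((U ⊓ h.filtration (i + 1)).map (h.proj i)) := by
  have := h.finrank_inf_filtration U le_rfl
  rwa [h.filtration_top, inf_top_eq, Finset.filter_true_of_mem fun i _ => i.2] at this

end DivisionRing

end DirectSum.IsInternal

theorem mem_intrinsicInterior_of_active_eq_zero {E ι : Type*} [NormedAddCommGroup E]
    [NormedSpace ℝ E] [FiniteDimensional ℝ E] {C : Set E} (L : Submodule ℝ E)
    (f : ι → Module.Dual ℝ E) (hC : ∀ τ, τ ∈ C ↔ τ ∈ L ∧ ∀ i, f i τ ≤ 0)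
    (hf : (Set.range f).Finite) {σ : E} (hσ : σ ∈ C)
    (hactive : ∀ i, f i σ = 0 → ∀ τ ∈ C, f i τ = 0) : σ ∈ intrinsicInterior ℝ C := by
  set T : Submodule ℝ E := L ⊓ ⨅ (i) (_ : f i σ = 0), LinearMap.ker (f i)
  have hspan : affineSpan ℝ C ≤ T.toAffineSubspace := by
    refine affineSpan_le.2 fun τ hτ => Submodule.mem_toAffineSubspace.2 ?_
    simp only [T, Submodule.mem_inf, Submodule.mem_iInf, LinearMap.mem_ker]
    exact ⟨((hC τ).1 hτ).1, fun i hi => hactive i hi τ hτ⟩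
  set U : Set E := ⋂ φ ∈ {φ ∈ Set.range f | φ σ < 0}, {τ | φ τ < 0}
  have hU : IsOpen U := (hf.subset (Set.sep_subset _ _)).isOpen_biInter fun φ _ =>
    isOpen_lt φ.continuous_of_finiteDimensional continuous_const
  have hσU : σ ∈ U := Set.mem_iInter₂.2 fun _ hφ => hφ.2
  have hUT : ∀ τ ∈ U, τ ∈ T → τ ∈ C := by
    intro τ hτU hτT
    simp only [T, Submodule.mem_inf, Submodule.mem_iInf, LinearMap.mem_ker] at hτT
    refine (hC τ).2 ⟨hτT.1, fun i => ?_⟩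
    rcases ((hC σ).1 hσ).2 i |>.lt_or_eq with hlt | heq
    · exact (Set.mem_iInter₂.1 hτU (f i) ⟨⟨i, rfl⟩, hlt⟩).le
    · exact (hτT.2 i heq).le
  refine mem_intrinsicInterior.2 ⟨⟨σ, subset_affineSpan ℝ C hσ⟩, ?_, rfl⟩
  exact mem_interior.2 ⟨Subtype.val ⁻¹' U, fun τ hτ => hUT τ hτ (hspan τ.2),
    hU.preimage continuous_subtype_val, hσU⟩

namespace QuiverRI

variable {V A : Type} {src tgt : A → V} {dv : V → ℕ} {R : Rep src tgt dv}

instance : Top (Subrep src tgt dv R) :=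
  ⟨⟨fun _ => ⊤, fun _ _ _ => Submodule.mem_top⟩⟩

section Decomposition

variable {k : ℕ} {S : Fin k → Subrep src tgt dv R}
  (hS : ∀ x, DirectSum.IsInternal fun j => (S j).space x)

/-- The `i`-th subquotient `W ∩ (S₀ ⊕ ⋯ ⊕ Sᵢ) / W ∩ (S₀ ⊕ ⋯ ⊕ Sᵢ₋₁)` of `W`, realised inside
`S i` as the image of the projection. -/
noncomputable def Subrep.piece (W : Subrep src tgt dv R) (i : Fin k) : Subrep src tgt dv R where
  space x := (W.space x ⊓ (hS x).filtration (i + 1)).map ((hS x).proj i)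
  invariant a := by
    rintro _ ⟨v, ⟨hvW, hvF⟩, rfl⟩
    have hRS : ∀ j, (S j).space (src a) ≤ ((S j).space (tgt a)).comap (R a).mulVecLin :=
      fun j => (S j).invariant a
    rw [← Matrix.mulVecLin_apply, ← (hS (src a)).proj_map (hS (tgt a)) _ hRS]
    exact Submodule.mem_map_of_mem
      ⟨W.invariant a v hvW, (hS (src a)).map_mem_filtration (hS (tgt a)) _ hRS hvF⟩

theorem Subrep.piece_le (W : Subrep src tgt dv R) (i : Fin k) (x : V) :
    (W.piece hS i).space x ≤ (S i).space x := by
  rintro _ ⟨v, -, rfl⟩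
  exact (hS x).proj_mem i v

theorem Subrep.piece_top (i : Fin k) :
    ((⊤ : Subrep src tgt dv R).piece hS i).space = (S i).space := by
  funext x
  refine le_antisymm (Subrep.piece_le hS ⊤ i x) fun v hv => ?_
  exact ⟨v, ⟨Submodule.mem_top, (hS x).mem_filtration_succ hv⟩, (hS x).proj_of_mem_same hv⟩

theorem finrank_eq_sum_finrank_piece (W : Subrep src tgt dv R) (x : V) :
    finrank ℝ (W.space x) = ∑ i, finrank ℝ ((W.piece hS i).space x) :=
  (hS x).finrank_eq_sum_finrank_map_proj (W.space x)

end Decomposition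

section Weight

variable [Fintype V]

noncomputable def weight {α : Type*} [Semiring α] (c : V → α) (W : Subrep src tgt dv R) : α :=
  ∑ x, c x * (finrank ℝ (W.space x) : α)

theorem weight_congr {α : Type*} [Semiring α] (c : V → α) {W W' : Subrep src tgt dv R}
    (h : W.space = W'.space) : weight c W = weight c W' := by
  rw [weight, weight, h]

theorem weight_eq_zero_of_space_eq_bot {α : Type*} [Semiring α] (c : V → α)
    {W : Subrep src tgt dv R} (h : W.space = fun _ => ⊥) : weight c W = 0 := by
  rw [weight, h]
  simp only [finrank_bot, Nat.cast_zero, mul_zero, Finset.sum_const_zero]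

theorem weight_top {α : Type*} [Semiring α] (c : V → α) :
    weight c (⊤ : Subrep src tgt dv R) = ∑ x, c x * (dv x : α) := by
  refine Finset.sum_congr rfl fun x _ => ?_
  rw [show (⊤ : Subrep src tgt dv R).space x = ⊤ from rfl, finrank_top, finrank_fin_fun]

theorem weight_intCast (σ : V → ℤ) (W : Subrep src tgt dv R) :
    weight (fun x => (σ x : ℝ)) W = ((weight σ W : ℤ) : ℝ) := by
  push_cast [weight]; rfl

noncomputable def weightDual (W : Subrep src tgt dv R) : Module.Dual ℝ (V → ℝ) :=
  (dotProductBilin ℝ ℝ).flip fun x => (finrank ℝ (W.space x) : ℝ)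

theorem weightDual_apply (W : Subrep src tgt dv R) (τ : V → ℝ) : weightDual W τ = weight τ W :=
  rfl

theorem finite_range_weightDual : (Set.range (weightDual (R := R))).Finite := by
  let g : (∀ x, Fin (dv x + 1)) → Module.Dual ℝ (V → ℝ) :=
    fun n => (dotProductBilin ℝ ℝ).flip fun x => ((n x : ℕ) : ℝ)
  refine (Set.finite_range g).subset ?_
  rintro _ ⟨W, rfl⟩
  exact ⟨fun x => ⟨finrank ℝ (W.space x),
    Nat.lt_succ_of_le ((Submodule.finrank_le _).trans_eq (finrank_fin_fun ℝ))⟩, rfl⟩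

theorem mem_orbitCone_iff {τ : V → ℝ} :
    τ ∈ OrbitCone src tgt dv R ↔
      τ ∈ LinearMap.ker (weightDual (⊤ : Subrep src tgt dv R)) ∧
        ∀ W : Subrep src tgt dv R, weightDual W τ ≤ 0 := by
  rw [LinearMap.mem_ker, weightDual_apply, weight_top]
  rfl

variable {k : ℕ} {S : Fin k → Subrep src tgt dv R}
  (hS : ∀ x, DirectSum.IsInternal fun j => (S j).space x)
include hS

theorem weight_eq_sum_weight_piece {α : Type*} [Semiring α] (c : V → α)
    (W : Subrep src tgt dv R) : weight c W = ∑ i, weight c (W.piece hS i) := by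
  simp only [weight, finrank_eq_sum_finrank_piece hS W, Nat.cast_sum, Finset.mul_sum]
  exact Finset.sum_comm

theorem sum_mul_dv_eq_sum_weight {α : Type*} [Semiring α] (c : V → α) :
    ∑ x, c x * (dv x : α) = ∑ i, weight c (S i) := by
  rw [← weight_top, weight_eq_sum_weight_piece hS]
  exact Finset.sum_congr rfl fun i _ => weight_congr c (Subrep.piece_top hS i)

end Weight

section Stability

variable [Fintype V] {σ : V → ℤ} {S W : Subrep src tgt dv R}

theorem IsStableSub.weight_nonpos (hS : IsStableSub src tgt dv R σ S)
    (hle : ∀ x, W.space x ≤ S.space x) : weight σ W ≤ 0 := by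
  by_cases hbot : W.space = fun _ => ⊥
  · exact (weight_eq_zero_of_space_eq_bot σ hbot).le
  by_cases hWS : W.space = S.space
  · exact ((weight_congr σ hWS).trans hS.1).le
  · exact (hS.2 W hle hbot hWS).le

theorem IsStableSub.space_eq_bot_or_eq_of_weight_eq_zero (hS : IsStableSub src tgt dv R σ S)
    (hle : ∀ x, W.space x ≤ S.space x) (hW : weight σ W = 0) :
    W.space = (fun _ => ⊥) ∨ W.space = S.space := by
  by_contra! h
  exact (hS.2 W hle h.1 h.2).ne hW

end Stability

namespace IsPolystable

variable [Fintype V] {σ : V → ℤ} (hpoly : IsPolystable src tgt dv R σ)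
include hpoly

theorem weight_nonpos (W : Subrep src tgt dv R) : weight σ W ≤ 0 := by
  obtain ⟨k, S, hS, hst⟩ := hpoly
  rw [weight_eq_sum_weight_piece hS]
  exact Finset.sum_nonpos fun i _ => (hst i).weight_nonpos (Subrep.piece_le hS W i)

theorem sum_mul_dv_eq_zero : ∑ x, σ x * (dv x : ℤ) = 0 := by
  obtain ⟨k, S, hS, hst⟩ := hpoly
  rw [sum_mul_dv_eq_sum_weight hS]
  exact Finset.sum_eq_zero fun i _ => (hst i).1

theorem mem_orbitCone : (fun x => (σ x : ℝ)) ∈ OrbitCone src tgt dv R := by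
  refine ⟨?_, fun W => ?_⟩
  · change ∑ x, (σ x : ℝ) * dv x = 0
    exact_mod_cast hpoly.sum_mul_dv_eq_zero
  · change weight _ W ≤ 0
    rw [weight_intCast]
    exact_mod_cast hpoly.weight_nonpos W

theorem weight_eq_zero_of_mem_orbitCone {W : Subrep src tgt dv R} (hW : weight σ W = 0)
    {τ : V → ℝ} (hτ : τ ∈ OrbitCone src tgt dv R) : weight τ W = 0 := by
  obtain ⟨k, S, hS, hst⟩ := hpoly
  have hτS : ∀ i, weight τ (S i) = 0 := fun i =>
    (Finset.sum_eq_zero_iff_of_nonpos fun j _ => hτ.2 (S j)).1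
      ((sum_mul_dv_eq_sum_weight hS τ).symm.trans hτ.1) i (Finset.mem_univ i)
  rw [weight_eq_sum_weight_piece hS] at hW
  have hσ : ∀ i, weight σ (W.piece hS i) = 0 := fun i =>
    (Finset.sum_eq_zero_iff_of_nonpos fun j _ =>
      (hst j).weight_nonpos (Subrep.piece_le hS W j)).1 hW i (Finset.mem_univ i)
  rw [weight_eq_sum_weight_piece hS]
  refine Finset.sum_eq_zero fun i _ => ?_
  rcases (hst i).space_eq_bot_or_eq_of_weight_eq_zero (Subrep.piece_le hS W i) (hσ i) with h | h
  · exact weight_eq_zero_of_space_eq_bot τ h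
  · exact (weight_congr τ h).trans (hτS i)

end IsPolystable

theorem polystable_mem_relint_general {V A : Type} [Fintype V]
    (src tgt : A → V) (dv : V → ℕ)
    (R : Rep src tgt dv) (σ : V → ℤ)
    (hpoly : IsPolystable src tgt dv R σ) :
    (fun x => (σ x : ℝ)) ∈ intrinsicInterior ℝ (OrbitCone src tgt dv R) := by
  refine mem_intrinsicInterior_of_active_eq_zero _ weightDual (fun _ => mem_orbitCone_iff)
    finite_range_weightDual hpoly.mem_orbitCone fun W hW τ hτ => ?_
  rw [weightDual_apply, weight_intCast] at hW
  exact hpoly.weight_eq_zero_of_mem_orbitCone (by exact_mod_cast hW) hτ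

/-- **Polystable implies interior (Lemma).**  For a finite connected acyclic quiver and an
integral weight `σ`, if a representation `R` is `σ`-polystable then `σ` lies in the
relative (intrinsic) interior of the orbit cone `Ω(R)`. -/
theorem polystable_mem_relint {V A : Type} [Fintype V] [DecidableEq V] [Fintype A]
    (src tgt : A → V) (dv : V → ℕ)
    (hconn : Connected src tgt) (hacyc : Acyclic src tgt)
    (R : Rep src tgt dv) (σ : V → ℤ)
    (hpoly : IsPolystable src tgt dv R σ) :
    (fun x => (σ x : ℝ)) ∈ intrinsicInterior ℝ (OrbitCone src tgt dv R) :=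
  polystable_mem_relint_general src tgt dv R σ hpoly

end QuiverRI
end

section
/- Let A be a finite-dimensional algebra over ℝ and let M, N be left A-modules that are finite-dimensional over ℝ. If the complexifications ℂ ⊗_ℝ M and ℂ ⊗_ℝ N are isomorphic as modules over the complexified algebra ℂ ⊗_ℝ A, then M and N are isomorphic as A-modules. -/
open TensorProduct

/-! Restricting a `ℂ ⊗ A`-isomorphism `e` to `M = 1 ⊗ M` and splitting off real and imaginary
parts writes `e = f_ℂ + i g_ℂ` with `f, g : M → N` real and `A`-linear. Then `det (f + t g)`,
in bases of `M` and `N`, is a real polynomial in `t` that does not vanish at `t = i`, so it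
does not vanish at some real `t`, and `f + t g` is an `A`-linear isomorphism. -/

/-- The `ℝ`-linear endomorphism of an `A`-module given by the action of `a : A`. -/
def actionMap (A : Type*) [Ring A] [Algebra ℝ A] (M : Type*) [AddCommGroup M]
    [Module ℝ M] [Module A M] [SMulCommClass ℝ A M] (a : A) : M →ₗ[ℝ] M where
  toFun m := a • m
  map_add' := smul_add a
  map_smul' r m := (smul_comm r a m).symm

section DetPolynomial

open Polynomial

theorem Matrix.aeval_det_map_C_add_X_smul {ι R S : Type*} [Fintype ι] [DecidableEq ι]
    [CommRing R] [CommRing S] [Algebra R S] (P Q : Matrix ι ι R) (s : S) :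
    aeval s (P.map C + (X : R[X]) • Q.map C).det =
      (P.map (algebraMap R S) + s • Q.map (algebraMap R S)).det := by
  rw [AlgHom.map_det]
  congr 1
  ext i j
  simpa using mul_comm _ _

theorem Matrix.exists_det_add_smul_ne_zero {ι K L : Type*} [Fintype ι] [DecidableEq ι]
    [Field K] [Infinite K] [CommRing L] [Algebra K L] (P Q : Matrix ι ι K) {c : L}
    (hc : (P.map (algebraMap K L) + c • Q.map (algebraMap K L)).det ≠ 0) :
    ∃ t : K, (P + t • Q).det ≠ 0 := by
  have hp : (P.map C + (X : K[X]) • Q.map C).det ≠ 0 := by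
    rintro hp
    rw [← Matrix.aeval_det_map_C_add_X_smul, hp, map_zero] at hc
    exact hc rfl
  obtain ⟨t, ht⟩ : ∃ t : K, (P.map C + (X : K[X]) • Q.map C).det.eval t ≠ 0 := by
    by_contra! h
    exact hp (Polynomial.zero_of_eval_zero _ h)
  refine ⟨t, ?_⟩
  simpa [← coe_aeval_eq_eval, Matrix.aeval_det_map_C_add_X_smul] using ht

end DetPolynomial

theorem LinearMap.exists_bijective_add_smul_of_baseChange {K L M N : Type*}
    [Field K] [Infinite K] [CommRing L] [Nontrivial L] [Algebra K L]
    [AddCommGroup M] [Module K M] [FiniteDimensional K M]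
    [AddCommGroup N] [Module K N] [FiniteDimensional K N] (f g : M →ₗ[K] N) (c : L)
    (hc : Function.Bijective (f.baseChange L + c • g.baseChange L)) :
    ∃ t : K, Function.Bijective (f + t • g) := by
  let e := LinearEquiv.ofBijective _ hc
  have hrank : Module.finrank K M = Module.finrank K N := by
    simpa only [Module.finrank_baseChange] using e.finrank_eq
  let bM := Module.finBasis K M
  let bN := (Module.finBasis K N).reindex (finCongr hrank.symm)
  obtain ⟨t, ht⟩ := Matrix.exists_det_add_smul_ne_zero (LinearMap.toMatrix bM bN f)
    (LinearMap.toMatrix bM bN g) (c := c) <| by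
      have hdet := (e.isUnit_det (Algebra.TensorProduct.basis L bM)
        (Algebra.TensorProduct.basis L bN)).ne_zero
      have he : (e : L ⊗[K] M →ₗ[L] L ⊗[K] N) = f.baseChange L + c • g.baseChange L := rfl
      rwa [he, map_add, map_smul, toMatrix_baseChange, toMatrix_baseChange] at hdet
  refine ⟨t, (LinearEquiv.ofIsUnitDet (f := f + t • g) (v := bM) (v' := bN) ?_).bijective⟩
  simpa [map_add, map_smul] using ht.isUnit

section Descent

variable {R L M N : Type*} [CommRing R] [CommRing L] [Algebra R L]
  [AddCommGroup M] [Module R M] [AddCommGroup N] [Module R N]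

def tensorCoord (φ : L →ₗ[R] R) : L ⊗[R] N →ₗ[R] N :=
  TensorProduct.lid R N ∘ₗ φ.rTensor N

@[simp]
lemma tensorCoord_tmul (φ : L →ₗ[R] R) (c : L) (n : N) :
    tensorCoord φ (c ⊗ₜ n) = φ c • n := by
  simp [tensorCoord]

lemma tensorCoord_baseChange (φ : L →ₗ[R] R) (T : M →ₗ[R] N) (z : L ⊗[R] M) :
    tensorCoord φ (T.baseChange L z) = T (tensorCoord φ z) := by
  induction z using TensorProduct.induction_on with
  | zero => simp
  | tmul c m => simp
  | add x y hx hy => simp only [map_add, hx, hy]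

def descendCoord (φ : L →ₗ[R] R) (e : L ⊗[R] M →ₗ[L] L ⊗[R] N) : M →ₗ[R] N :=
  tensorCoord φ ∘ₗ e.restrictScalars R ∘ₗ TensorProduct.mk R L M 1

lemma descendCoord_apply (φ : L →ₗ[R] R) (e : L ⊗[R] M →ₗ[L] L ⊗[R] N) (m : M) :
    descendCoord φ e m = tensorCoord φ (e (1 ⊗ₜ m)) := rfl

lemma descendCoord_map_of_intertwines (φ : L →ₗ[R] R) {e : L ⊗[R] M →ₗ[L] L ⊗[R] N}
    {S : M →ₗ[R] M} {T : N →ₗ[R] N} (h : ∀ x, e (S.baseChange L x) = T.baseChange L (e x))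
    (m : M) : descendCoord φ e (S m) = T (descendCoord φ e m) := by
  rw [descendCoord_apply, descendCoord_apply, ← tensorCoord_baseChange, ← h,
    LinearMap.baseChange_tmul]

end Descent

section Complex

variable {M N : Type*} [AddCommGroup M] [Module ℝ M] [AddCommGroup N] [Module ℝ N]

lemma one_tmul_tensorCoord_re_add_I_tmul_tensorCoord_im (z : ℂ ⊗[ℝ] N) :
    1 ⊗ₜ tensorCoord Complex.reLm z + Complex.I ⊗ₜ tensorCoord Complex.imLm z = z := by
  induction z using TensorProduct.induction_on with
  | zero => simp
  | tmul c n =>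
    simp only [tensorCoord_tmul, tmul_smul, smul_tmul', ← add_tmul]
    congr 1
    simp [Complex.real_smul]
  | add x y hx hy =>
    simp only [map_add, tmul_add]
    linear_combination (norm := abel) hx + hy

lemma baseChange_descendCoord_re_add_I_smul (e : ℂ ⊗[ℝ] M →ₗ[ℂ] ℂ ⊗[ℝ] N) :
    (descendCoord Complex.reLm e).baseChange ℂ +
      Complex.I • (descendCoord Complex.imLm e).baseChange ℂ = e := by
  ext m
  simpa [descendCoord_apply, smul_tmul'] using
    one_tmul_tensorCoord_re_add_I_tmul_tensorCoord_im (e (1 ⊗ₜ m))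

end Complex

@[simp]
lemma actionMap_apply (A : Type*) [Ring A] [Algebra ℝ A] (M : Type*) [AddCommGroup M]
    [Module ℝ M] [Module A M] [SMulCommClass ℝ A M] (a : A) (m : M) :
    actionMap A M a m = a • m := rfl

theorem complexification_reflects_iso_general
    (A : Type*) [Ring A] [Algebra ℝ A]
    (M : Type*) [AddCommGroup M] [Module ℝ M] [Module A M]
    [SMulCommClass ℝ A M] [FiniteDimensional ℝ M]
    (N : Type*) [AddCommGroup N] [Module ℝ N] [Module A N]
    [SMulCommClass ℝ A N] [FiniteDimensional ℝ N]
    (h : ∃ e : (ℂ ⊗[ℝ] M) ≃ₗ[ℂ] (ℂ ⊗[ℝ] N), ∀ (a : A) (x : ℂ ⊗[ℝ] M),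
      e ((actionMap A M a).baseChange ℂ x) = (actionMap A N a).baseChange ℂ (e x)) :
    ∃ f : M ≃ₗ[ℝ] N, ∀ (a : A) (x : M), f (a • x) = a • f x := by
  obtain ⟨e, he⟩ := h
  set f := descendCoord Complex.reLm (e : ℂ ⊗[ℝ] M →ₗ[ℂ] ℂ ⊗[ℝ] N)
  set g := descendCoord Complex.imLm (e : ℂ ⊗[ℝ] M →ₗ[ℂ] ℂ ⊗[ℝ] N)
  have hf (a : A) (m : M) : f (a • m) = a • f m := descendCoord_map_of_intertwines _ (he a) m
  have hg (a : A) (m : M) : g (a • m) = a • g m := descendCoord_map_of_intertwines _ (he a) m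
  obtain ⟨t, ht⟩ := LinearMap.exists_bijective_add_smul_of_baseChange f g Complex.I <| by
    rw [baseChange_descendCoord_re_add_I_smul]
    exact e.bijective
  refine ⟨LinearEquiv.ofBijective _ ht, fun a m => ?_⟩
  simp [LinearEquiv.ofBijective_apply, hf, hg, smul_comm t a]

/-- **Complexification reflects isomorphism.**  Let `A` be a finite-dimensional `ℝ`-algebra
and `M`, `N` finite-dimensional `A`-modules.  If the complexifications `ℂ ⊗[ℝ] M` and
`ℂ ⊗[ℝ] N` are isomorphic as modules over `ℂ ⊗[ℝ] A` (i.e. there is a `ℂ`-linear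
equivalence intertwining the base-changed action of every `a : A`), then `M ≅ N` as
`A`-modules. -/
theorem complexification_reflects_iso
    (A : Type*) [Ring A] [Algebra ℝ A] [FiniteDimensional ℝ A]
    (M : Type*) [AddCommGroup M] [Module ℝ M] [Module A M]
    [IsScalarTower ℝ A M] [SMulCommClass ℝ A M] [FiniteDimensional ℝ M]
    (N : Type*) [AddCommGroup N] [Module ℝ N] [Module A N]
    [IsScalarTower ℝ A N] [SMulCommClass ℝ A N] [FiniteDimensional ℝ N]
    (h : ∃ e : (ℂ ⊗[ℝ] M) ≃ₗ[ℂ] (ℂ ⊗[ℝ] N), ∀ (a : A) (x : ℂ ⊗[ℝ] M),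
      e ((actionMap A M a).baseChange ℂ x) = (actionMap A N a).baseChange ℂ (e x)) :
    ∃ f : M ≃ₗ[ℝ] N, ∀ (a : A) (x : M), f (a • x) = a • f x :=
  complexification_reflects_iso_general A M N h
end
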